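/- arXiv:1703.07868 — 4 statements merged into one kernel-verified Lean document; each statement's English description precedes it below -/
import Mathlib

section
/- Let φ and ψ be continuous increasing functions on [0,∞) with φ(0)=ψ(0)=0, φ(t)→∞, and ψ/φ nondecreasing. Set a_n = φ(n), b_n = ψ(n). Let V_1,...,V_n be independent symmetric B-valued random variables. Then for all t ≥ 0, P(‖Σ_{i=1}^n V_i‖ > t b_n) ≤ 4 P(‖Σ_{i=1}^n φ(ψ⁻¹(‖V_i‖)) V_i/‖V_i‖‖ > t a_n) + Σ_{i=1}^n P(‖V_i‖ > b_n). -/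
open MeasureTheory ProbabilityTheory Set Filter

/-!
On the event that every `‖Vᵢ‖ ≤ bₙ`, the sum `∑ Vᵢ` equals `(bₙ / aₙ) ∑ κᵢ h(Vᵢ)`,
where `h(v) = φ(ψ⁻¹‖v‖) v / ‖v‖` and the weights `κᵢ = κ(‖Vᵢ‖)` lie in `[0, 1]` because
`ψ / φ` is nondecreasing. The contraction principle `P(‖∑ κᵢ Yᵢ‖ > u) ≤ 2 P(‖∑ Yᵢ‖ > u)`,
for sign-symmetric independent `Yᵢ` and weights that do not see the signs, then gives the
bound (even with `2` in place of `4`).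

The contraction principle is Lévy's reflection argument run along the superlevel sets of the
weights. Since `∑ κᵢ Yᵢ` is a convex combination of the partial sums over these (nested) sets,
if it exceeds `u` then so does the partial sum over some superlevel set; let `K` be the
smallest one. Flipping the signs of the `Yᵢ` with `i ∉ K` preserves the event "`K` is the
smallest" and the law, and `∑ Y` and its flip average to `∑_{i ∈ K} Yᵢ`, so one of the two
exceeds `u`.
-/

section Superlevel

variable {ι : Type*}

-- Equivalently, `K = {i | s < c i}` for some `s`.
def IsSuperlevel (c : ι → ℝ) (K : Finset ι) : Prop :=
  ∀ i ∈ K, ∀ k ∉ K, c k < c i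

theorem IsSuperlevel.subset_or_subset {c : ι → ℝ} {K L : Finset ι} (hK : IsSuperlevel c K)
    (hL : IsSuperlevel c L) : K ⊆ L ∨ L ⊆ K := by
  by_contra! h
  obtain ⟨⟨i, hiK, hiL⟩, ⟨k, hkL, hkK⟩⟩ :=
    And.imp Finset.not_subset.mp Finset.not_subset.mp h
  exact (hK i hiK k hkK).asymm (hL k hkL i hiL)

theorem IsSuperlevel.of_comp {c : ι → ℝ} {g : ℝ → ℝ} (hg : Monotone g) {K : Finset ι}
    (hK : IsSuperlevel (g ∘ c) K) : IsSuperlevel c K :=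
  fun i hi k hk => lt_of_not_ge fun hle => (hK i hi k hk).not_ge (hg hle)

theorem isSuperlevel_filter_pos [Fintype ι] (c : ι → ℝ) :
    IsSuperlevel c (Finset.univ.filter (0 < c ·)) := by
  intro i hi k hk
  simp only [Finset.mem_filter, Finset.mem_univ, true_and] at hi hk
  linarith

variable {E : Type*} [NormedAddCommGroup E] [NormedSpace ℝ E]

/-- Peel off the smallest positive value `m` of `c`: `c = m • 1_{c > 0} + (1 - m) • c'` where
`c'` is again `[0, 1]`-valued, has fewer positive values and coarser superlevel sets. -/
theorem norm_sum_smul_le_of_isSuperlevel [Fintype ι] {c : ι → ℝ} (hc : ∀ i, c i ∈ Icc 0 1)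
    {y : ι → E} {u : ℝ} (hy : ∀ K, IsSuperlevel c K → ‖∑ i ∈ K, y i‖ ≤ u) :
    ‖∑ i, c i • y i‖ ≤ u := by
  classical
  induction hN : (Finset.univ.filter (0 < c ·)).card using Nat.strong_induction_on
    generalizing c with
  | _ N ih =>
  set T := Finset.univ.filter (0 < c ·)
  rcases T.eq_empty_or_nonempty with hT | hT
  · have hc0 : ∀ i, c i = 0 := fun i =>
      le_antisymm (not_lt.mp fun h => Finset.eq_empty_iff_forall_notMem.mp hT i (by simpa [T]))
        (hc i).1
    simpa [hc0] using hy ∅ (by simp [IsSuperlevel])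
  obtain ⟨i₀, hi₀, hmin⟩ := T.exists_min_image c hT
  set m := c i₀
  have hm : 0 < m := (Finset.mem_filter.mp hi₀).2
  have hm1 : m ≤ 1 := (hc i₀).2
  set g : ℝ → ℝ := fun t => max (t - m) 0 / (1 - m)
  have hg : Monotone g := fun a b hab =>
    div_le_div_of_nonneg_right (max_le_max (by linarith) le_rfl) (by linarith)
  have hmul_g : ∀ t ≤ 1, (1 - m) * g t = max (t - m) 0 := by
    intro t ht
    rcases hm1.eq_or_lt with h1 | h1
    · simp [g, h1, ht]
    · exact mul_div_cancel₀ _ (sub_pos.mpr h1).ne'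
  have hgc : ∀ i, (g ∘ c) i ∈ Icc 0 1 := fun i =>
    ⟨div_nonneg (le_max_right _ _) (by linarith),
      div_le_one_of_le₀ (max_le (by linarith [(hc i).2]) (by linarith)) (by linarith)⟩
  have hdecomp : ∀ i, c i = (if 0 < c i then m else 0) + (1 - m) * g (c i) := by
    intro i
    rw [hmul_g _ (hc i).2]
    split_ifs with hi
    · have : m ≤ c i := hmin i (by simpa [T])
      rw [max_eq_left (by linarith)]; ring
    · have : c i = 0 := le_antisymm (not_lt.mp hi) (hc i).1
      simp [this, hm.le]
  have hcard : (Finset.univ.filter (0 < (g ∘ c) ·)).card < N := by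
    rw [← hN]
    refine Finset.card_lt_card ((Finset.ssubset_iff_of_subset fun i hi => ?_).mpr
      ⟨i₀, hi₀, by simp [g, m]⟩)
    simp only [T, Finset.mem_filter, Finset.mem_univ, true_and, Function.comp_apply] at hi ⊢
    have hpos : 0 < max (c i - m) 0 := ((div_pos_iff.mp hi).resolve_right fun h => by
      linarith [h.2]).1
    linarith [(lt_max_iff.mp hpos).resolve_right (lt_irrefl 0)]
  have hsum : ∑ i, c i • y i = m • ∑ i ∈ T, y i + (1 - m) • ∑ i, (g ∘ c) i • y i := by
    conv_lhs => rw [Finset.sum_congr rfl fun i _ => congrArg (· • y i) (hdecomp i)]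
    simp only [add_smul, mul_smul, ite_smul, zero_smul, Finset.sum_add_distrib,
      ← Finset.smul_sum, Finset.sum_ite, Finset.sum_const_zero, add_zero, T,
      Function.comp_apply]
  calc ‖∑ i, c i • y i‖ ≤ m * u + (1 - m) * u := by
        rw [hsum]
        refine (norm_add_le _ _).trans (add_le_add ?_ ?_) <;>
          rw [norm_smul, Real.norm_of_nonneg (by linarith)] <;> gcongr
        · exact hy T (isSuperlevel_filter_pos c)
        · exact ih _ hcard hgc (fun K hK => hy K (hK.of_comp hg)) rfl
    _ = u := by ring

end Superlevel

section SignFlip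

variable {ι E : Type*} [DecidableEq ι]

def flipOutside [Neg E] (s : Finset ι) (x : ι → E) : ι → E :=
  s.piecewise x (-x)

theorem flipOutside_comp [Neg E] {F : Type*} [Neg F] {h : E → F} (hodd : ∀ v, h (-v) = -h v)
    (s : Finset ι) (x : ι → E) : flipOutside s (h ∘ x) = h ∘ flipOutside s x := by
  funext i
  by_cases hi : i ∈ s <;> simp [flipOutside, hi, hodd]

theorem measurable_flipOutside [MeasurableSpace E] [Neg E] [MeasurableNeg E] (s : Finset ι) :
    Measurable (flipOutside (E := E) s) := by
  refine measurable_pi_lambda _ fun i => ?_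
  by_cases hi : i ∈ s
  · simp only [flipOutside, Finset.piecewise_eq_of_mem _ _ _ hi]
    fun_prop
  · simp only [flipOutside, Finset.piecewise_eq_of_notMem _ _ _ hi, Pi.neg_apply]
    fun_prop

theorem sum_flipOutside_of_subset [AddCommGroup E] {K L : Finset ι} (hLK : L ⊆ K)
    (x : ι → E) : ∑ i ∈ L, flipOutside K x i = ∑ i ∈ L, x i :=
  Finset.sum_congr rfl fun _ hi => Finset.piecewise_eq_of_mem _ _ _ (hLK hi)

theorem sum_add_sum_flipOutside [Fintype ι] [AddCommGroup E] (K : Finset ι) (x : ι → E) :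
    ∑ i, x i + ∑ i, flipOutside K x i = 2 • ∑ i ∈ K, x i := by
  simp only [flipOutside, Finset.sum_piecewise, Finset.univ_inter, Pi.neg_apply,
    Finset.sum_neg_distrib, ← Finset.sum_add_sum_compl K x, Finset.compl_eq_univ_sdiff]
  abel

theorem MeasureTheory.Measure.pi_map_flipOutside [Fintype ι] [MeasurableSpace E] [Neg E]
    [MeasurableNeg E] {ν : ι → Measure E} [∀ i, SigmaFinite (ν i)]
    (hν : ∀ i, (ν i).map Neg.neg = ν i) (s : Finset ι) :
    (Measure.pi ν).map (flipOutside s) = Measure.pi ν := by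
  set f : ι → E → E := fun i => if i ∈ s then id else Neg.neg
  have hf : ∀ i, (ν i).map (f i) = ν i := fun i => by
    by_cases hi : i ∈ s <;> simp [f, hi, hν]
  have : ∀ i, SigmaFinite ((ν i).map (f i)) := fun i => by rw [hf]; infer_instance
  have hflip : flipOutside s = fun x i => f i (x i) := by
    funext x i
    by_cases hi : i ∈ s <;> simp [flipOutside, f, hi]
  have hfm : ∀ i, Measurable (f i) := fun i => by
    by_cases hi : i ∈ s <;> simp only [f, hi, ↓reduceIte] <;> fun_prop
  rw [hflip, Measure.pi_map_pi fun i => (hfm i).aemeasurable]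
  simp only [hf]

end SignFlip

theorem MeasureTheory.measure_le_two_mul_measure_inter_of_map_eq {α : Type*}
    [MeasurableSpace α] {μ : Measure α} {F : α → α} (hF : Measurable F) (hμF : μ.map F = μ)
    {A S : Set α} (hA : F ⁻¹' A = A) (hAS : A ⊆ S ∪ F ⁻¹' S) : μ A ≤ 2 * μ (A ∩ S) :=
  calc μ A ≤ μ (A ∩ S) + μ (F ⁻¹' (A ∩ S)) := by
        rw [preimage_inter, hA]
        exact (measure_mono fun x hx => (hAS hx).imp (⟨hx, ·⟩) (⟨hx, ·⟩)).trans
          (measure_union_le _ _)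
    _ ≤ μ (A ∩ S) + μ (A ∩ S) := by
        have := Measure.le_map_apply (μ := μ) hF.aemeasurable (A ∩ S)
        rw [hμF] at this
        exact add_le_add le_rfl this
    _ = 2 * μ (A ∩ S) := (two_mul _).symm

section Contraction

variable {ι E : Type*} [NormedAddCommGroup E]

theorem lt_norm_sum_or_lt_norm_sum_flipOutside [Fintype ι] [DecidableEq ι] [NormedSpace ℝ E]
    {K : Finset ι} {y : ι → E} {u : ℝ} (hK : u < ‖∑ i ∈ K, y i‖) :
    u < ‖∑ i, y i‖ ∨ u < ‖∑ i, flipOutside K y i‖ := by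
  by_contra! h
  have := norm_add_le (∑ i, y i) (∑ i, flipOutside K y i)
  rw [sum_add_sum_flipOutside, RCLike.norm_nsmul ℝ, nsmul_eq_mul, Nat.cast_ofNat] at this
  linarith [h.1, h.2]

def IsFirstExceedance (c : ι → ℝ) (y : ι → E) (u : ℝ) (K : Finset ι) : Prop :=
  Minimal (fun L => IsSuperlevel c L ∧ u < ‖∑ i ∈ L, y i‖) K

theorem exists_isFirstExceedance [Fintype ι] [NormedSpace ℝ E] {c : ι → ℝ}
    (hc : ∀ i, c i ∈ Icc 0 1) {y : ι → E} {u : ℝ} (h : u < ‖∑ i, c i • y i‖) :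
    ∃ K, IsFirstExceedance c y u K := by
  refine exists_minimal_of_wellFoundedLT _ ?_
  by_contra! hle
  exact h.not_ge (norm_sum_smul_le_of_isSuperlevel hc fun K hK => hle K hK)

theorem IsFirstExceedance.eq {c : ι → ℝ} {y : ι → E} {u : ℝ} {K L : Finset ι}
    (hK : IsFirstExceedance c y u K) (hL : IsFirstExceedance c y u L) : K = L := by
  rcases hK.prop.1.subset_or_subset hL.prop.1 with h | h
  · exact hL.eq_of_le hK.prop h
  · exact (hK.eq_of_le hL.prop h).symm

theorem isFirstExceedance_flipOutside_iff [DecidableEq ι] {c : ι → ℝ} {y : ι → E} {u : ℝ}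
    {K : Finset ι} : IsFirstExceedance c (flipOutside K y) u K ↔ IsFirstExceedance c y u K := by
  have hsum : ∀ L ⊆ K, ∑ i ∈ L, flipOutside K y i = ∑ i ∈ L, y i :=
    fun L hLK => sum_flipOutside_of_subset hLK y
  simp only [IsFirstExceedance, Minimal, hsum K subset_rfl]
  refine and_congr_right' (forall_congr' fun L => ?_)
  exact ⟨fun h hL hLK => h (by rwa [hsum L hLK]) hLK,
    fun h hL hLK => h (by rwa [← hsum L hLK]) hLK⟩

variable [Fintype ι] [MeasurableSpace E] [BorelSpace E] [SecondCountableTopology E]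

theorem measurableSet_isFirstExceedance {c : (ι → E) → ι → ℝ} (hc : Measurable c) {h : E → E}
    (hh : Measurable h) (u : ℝ) (K : Finset ι) :
    MeasurableSet {x | IsFirstExceedance (c x) (h ∘ x) u K} := by
  simp only [IsFirstExceedance, Minimal, IsSuperlevel, Function.comp_apply]
  refine measurableSet_setOfPred.mpr ?_
  fun_prop

theorem measure_lt_norm_sum_smul_le_two_mul [DecidableEq ι] [NormedSpace ℝ E]
    {μ : Measure (ι → E)} (hμ : ∀ s, μ.map (flipOutside s) = μ) {h : E → E} (hh : Measurable h)
    (hodd : ∀ v, h (-v) = -h v) {c : (ι → E) → ι → ℝ} (hc : Measurable c)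
    (hc01 : ∀ x i, c x i ∈ Icc 0 1) (hcflip : ∀ s x, c (flipOutside s x) = c x) (u : ℝ) :
    μ {x | u < ‖∑ i, c x i • h (x i)‖} ≤ 2 * μ {x | u < ‖∑ i, h (x i)‖} := by
  set S := {x : ι → E | u < ‖∑ i, h (x i)‖}
  set A : Finset ι → Set (ι → E) := fun K => {x | IsFirstExceedance (c x) (h ∘ x) u K}
  have hA : ∀ K, MeasurableSet (A K) := measurableSet_isFirstExceedance hc hh u
  have hdisj : Pairwise fun K L => Disjoint (A K) (A L) := fun K L hKL =>
    disjoint_left.mpr fun x hK hL => hKL (IsFirstExceedance.eq hK hL)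
  have hpiece : ∀ K, μ (A K) ≤ 2 * μ (A K ∩ S) := by
    intro K
    refine measure_le_two_mul_measure_inter_of_map_eq (measurable_flipOutside K) (hμ K) ?_ ?_
    · ext x
      simp only [A, mem_preimage, mem_ofPred_eq, hcflip, ← flipOutside_comp hodd,
        isFirstExceedance_flipOutside_iff]
    · intro x (hx : IsFirstExceedance (c x) (h ∘ x) u K)
      have := lt_norm_sum_or_lt_norm_sum_flipOutside hx.prop.2
      rwa [flipOutside_comp hodd] at this
  calc μ {x | u < ‖∑ i, c x i • h (x i)‖} ≤ μ (⋃ K, A K) :=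
        measure_mono fun x hx => mem_iUnion.mpr (exists_isFirstExceedance (hc01 x) hx)
    _ ≤ ∑ K, μ (A K) := measure_iUnion_fintype_le _ _
    _ ≤ ∑ K, 2 * μ.restrict S (A K) := by
        gcongr with K
        rw [Measure.restrict_apply (hA K)]
        exact hpiece K
    _ ≤ 2 * μ.restrict S univ := by
        rw [← Finset.mul_sum]
        gcongr
        exact sum_measure_le_measure_univ (fun K _ => (hA K).nullMeasurableSet)
          fun K _ L _ hKL => (hdisj hKL).aedisjoint
    _ = 2 * μ S := by rw [Measure.restrict_apply_univ]

end Contraction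

section Growth

theorem StrictMonoOn.pos_of_map_zero {f : ℝ → ℝ} (hf : StrictMonoOn f (Ici 0)) (h0 : f 0 = 0)
    {r : ℝ} (hr : 0 < r) : 0 < f r :=
  h0 ▸ hf self_mem_Ici hr.le hr

theorem tendsto_atTop_of_monotone_ratio {φ ψ : ℝ → ℝ} (hφ : Tendsto φ atTop atTop)
    (hratio : ∀ s t : ℝ, 0 < s → s ≤ t → ψ s / φ s ≤ ψ t / φ t) (h1 : 0 < ψ 1 / φ 1) :
    Tendsto ψ atTop atTop := by
  refine tendsto_atTop_mono' atTop ?_ (hφ.const_mul_atTop h1)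
  filter_upwards [eventually_ge_atTop 1, hφ.eventually_gt_atTop 0] with t ht hφt
  exact (le_div_iff₀ hφt).mp (hratio 1 t one_pos ht)

theorem surjOn_Ici_zero_of_tendsto_atTop {ψ : ℝ → ℝ} (hψc : ContinuousOn ψ (Ici 0))
    (hψ0 : ψ 0 = 0) (hψ : Tendsto ψ atTop atTop) : SurjOn ψ (Ici 0) (Ici 0) := by
  intro r (hr : 0 ≤ r)
  obtain ⟨T, hT0, hT⟩ := ((eventually_ge_atTop 0).and (hψ.eventually_ge_atTop r)).exists
  obtain ⟨s, hs, rfl⟩ := intermediate_value_Icc hT0 (hψc.mono Icc_subset_Ici_self)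
    ⟨by rwa [hψ0], hT⟩
  exact ⟨s, hs.1, rfl⟩

variable {φ ψ ψinv : ℝ → ℝ}

theorem monotoneOn_comp_rightInvOn (hφm : StrictMonoOn φ (Ici 0))
    (hψm : StrictMonoOn ψ (Ici 0)) (hmaps : MapsTo ψinv (Ici 0) (Ici 0))
    (hright : RightInvOn ψinv ψ (Ici 0)) : MonotoneOn (fun r => φ (ψinv r)) (Ici 0) :=
  hφm.monotoneOn.comp (fun a ha b hb hab =>
    (hψm.le_iff_le (hmaps ha) (hmaps hb)).mp (by rwa [hright ha, hright hb])) hmaps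

theorem rightInvOn_pos (hψm : StrictMonoOn ψ (Ici 0)) (hψ0 : ψ 0 = 0)
    (hmaps : MapsTo ψinv (Ici 0) (Ici 0)) (hright : RightInvOn ψinv ψ (Ici 0)) {r : ℝ}
    (hr : 0 < r) : 0 < ψinv r :=
  (hψm.lt_iff_lt self_mem_Ici (hmaps hr.le)).mp (by rwa [hψ0, hright hr.le])

theorem div_comp_rightInvOn_le (hψm : StrictMonoOn ψ (Ici 0)) (hψ0 : ψ 0 = 0)
    (hmaps : MapsTo ψinv (Ici 0) (Ici 0)) (hright : RightInvOn ψinv ψ (Ici 0))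
    (hratio : ∀ s t : ℝ, 0 < s → s ≤ t → ψ s / φ s ≤ ψ t / φ t) {T : ℝ} (hT : 0 ≤ T) {r : ℝ}
    (hr : 0 < r) (hrT : r ≤ ψ T) : r / φ (ψinv r) ≤ ψ T / φ T := by
  have hsT : ψinv r ≤ T := (hψm.le_iff_le (hmaps hr.le) hT).mp (by rwa [hright hr.le])
  have := hratio _ T (rightInvOn_pos hψm hψ0 hmaps hright hr) hsT
  rwa [hright hr.le] at this

end Growth

section Weight

variable {E : Type*} [NormedAddCommGroup E] [MeasurableSpace E] [OpensMeasurableSpace E]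

theorem MonotoneOn.measurable_comp_norm {g : ℝ → ℝ} (hg : MonotoneOn g (Ici 0)) :
    Measurable fun v : E => g ‖v‖ := by
  have hmono : Monotone fun r => g (max r 0) := fun a b hab =>
    hg (le_max_right a 0) (le_max_right b 0) (max_le_max hab le_rfl)
  have hcomp : (fun v : E => g ‖v‖) = (fun r => g (max r 0)) ∘ norm :=
    funext fun v => by simp only [Function.comp_apply, max_eq_left (norm_nonneg v)]
  exact hcomp ▸ hmono.measurable.comp measurable_norm

theorem exists_weight_smul_eq [NormedSpace ℝ E] {g : ℝ → ℝ} (hg : MonotoneOn g (Ici 0))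
    (hgpos : ∀ r, 0 < r → 0 < g r) {a b : ℝ} (ha : 0 < a) (hb : 0 < b)
    (hgb : ∀ r, 0 < r → r ≤ b → r / g r ≤ b / a) :
    ∃ κ : E → ℝ, Measurable κ ∧ (∀ v, κ v ∈ Icc 0 1) ∧ (∀ v, κ (-v) = κ v) ∧
      ∀ v, ‖v‖ ≤ b → κ v • g ‖v‖ • ‖v‖⁻¹ • v = (a / b) • v := by
  refine ⟨fun v => if ‖v‖ ≤ b then ‖v‖ / g ‖v‖ / (b / a) else 0, ?_, fun v => ?_,
    fun v => by simp only [norm_neg], fun v hv => ?_⟩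
  · exact Measurable.ite (measurableSet_le measurable_norm measurable_const)
      ((measurable_norm.div hg.measurable_comp_norm).div_const _) measurable_const
  · by_cases hv : v = 0
    · simp [hv, hb.le]
    have hr := norm_pos_iff.mpr hv
    beta_reduce
    split_ifs with hvb
    · exact ⟨by have := hgpos _ hr; positivity,
        (div_le_one (by positivity)).mpr (hgb _ hr hvb)⟩
    · simp
  · by_cases hv0 : v = 0
    · simp [hv0]
    have hr := norm_pos_iff.mpr hv0
    have := hgpos _ hr
    beta_reduce
    rw [if_pos hv, smul_smul, smul_smul]
    congr 1
    field_simp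

end Weight

section Truncation

variable {Ω ι E : Type*} [MeasurableSpace Ω] {P : Measure Ω} [IsProbabilityMeasure P]
  [Fintype ι] [DecidableEq ι]

theorem ProbabilityTheory.iIndepFun.map_flipOutside [MeasurableSpace E] [Neg E]
    [MeasurableNeg E] {V : ι → Ω → E} (hmeas : ∀ i, Measurable (V i)) (hindep : iIndepFun V P)
    (hsymm : ∀ i, P.map (fun ω => -V i ω) = P.map (V i)) (s : Finset ι) :
    (P.map fun ω i => V i ω).map (flipOutside s) = P.map fun ω i => V i ω := by
  rw [(iIndepFun_iff_map_fun_eq_pi_map fun i => (hmeas i).aemeasurable).mp hindep]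
  exact Measure.pi_map_flipOutside
    (fun i => by rw [Measure.map_map measurable_neg (hmeas i)]; exact hsymm i) s

variable [NormedAddCommGroup E] [NormedSpace ℝ E] [MeasurableSpace E] [BorelSpace E]
  [SecondCountableTopology E]

theorem measure_lt_norm_sum_le_of_weight {V : ι → Ω → E} (hmeas : ∀ i, Measurable (V i))
    (hindep : iIndepFun V P) (hsymm : ∀ i, P.map (fun ω => -V i ω) = P.map (V i)) {h : E → E}
    (hh : Measurable h) (hodd : ∀ v, h (-v) = -h v) {κ : E → ℝ} (hκ : Measurable κ)
    (hκ01 : ∀ v, κ v ∈ Icc 0 1) (hκneg : ∀ v, κ (-v) = κ v) {a b : ℝ} (ha : 0 < a)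
    (hb : 0 < b) (hκh : ∀ v, ‖v‖ ≤ b → κ v • h v = (a / b) • v) (t : ℝ) :
    P {ω | t * b < ‖∑ i, V i ω‖} ≤
      2 * P {ω | t * a < ‖∑ i, h (V i ω)‖} + ∑ i, P {ω | b < ‖V i ω‖} := by
  set J : Ω → ι → E := fun ω i => V i ω
  have hJ : Measurable J := measurable_pi_lambda _ hmeas
  set C := {x : ι → E | t * a < ‖∑ i, κ (x i) • h (x i)‖}
  have hcover : {ω | t * b < ‖∑ i, V i ω‖} ⊆ J ⁻¹' C ∪ ⋃ i, {ω | b < ‖V i ω‖} := by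
    intro ω (hω : t * b < ‖∑ i, V i ω‖)
    by_cases hgood : ∀ i, ‖V i ω‖ ≤ b
    · refine Or.inl (show t * a < ‖∑ i, κ (V i ω) • h (V i ω)‖ from ?_)
      rw [Finset.sum_congr rfl fun i _ => hκh _ (hgood i), ← Finset.smul_sum, norm_smul,
        Real.norm_of_nonneg (by positivity)]
      calc t * a = a / b * (t * b) := by field_simp
        _ < a / b * ‖∑ i, V i ω‖ := by gcongr
    · obtain ⟨i, hi⟩ := not_forall.mp hgood
      exact Or.inr (mem_iUnion.mpr ⟨i, not_le.mp hi⟩)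
  have hcflip : ∀ (s : Finset ι) (x : ι → E),
      (fun i => κ (flipOutside s x i)) = fun i => κ (x i) := fun s x =>
    funext fun i => by by_cases hi : i ∈ s <;> simp [flipOutside, hi, hκneg]
  have hW : MeasurableSet {x : ι → E | t * a < ‖∑ i, h (x i)‖} :=
    measurableSet_lt measurable_const (by fun_prop)
  calc P {ω | t * b < ‖∑ i, V i ω‖} ≤ P (J ⁻¹' C) + ∑ i, P {ω | b < ‖V i ω‖} :=
        (measure_mono hcover).trans ((measure_union_le _ _).trans
          (add_le_add le_rfl (measure_iUnion_fintype_le _ _)))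
    _ ≤ 2 * P.map J {x | t * a < ‖∑ i, h (x i)‖} + ∑ i, P {ω | b < ‖V i ω‖} := by
        gcongr
        exact (Measure.le_map_apply hJ.aemeasurable C).trans
          (measure_lt_norm_sum_smul_le_two_mul (hindep.map_flipOutside hmeas hsymm) hh hodd
            (c := fun x i => κ (x i)) (by fun_prop) (fun x i => hκ01 _) hcflip _)
    _ = 2 * P {ω | t * a < ‖∑ i, h (V i ω)‖} + ∑ i, P {ω | b < ‖V i ω‖} := by
        rw [Measure.map_apply hJ hW]
        rfl

end Truncation

theorem stmt4_general {Ω : Type*} [MeasurableSpace Ω] (P : Measure Ω) [IsProbabilityMeasure P]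
    {E : Type*} [NormedAddCommGroup E] [NormedSpace ℝ E]
    [SecondCountableTopology E] [MeasurableSpace E] [BorelSpace E]
    (φ ψ ψinv : ℝ → ℝ)
    (hφm : StrictMonoOn φ (Ici 0)) (hφ0 : φ 0 = 0)
    (hψc : ContinuousOn ψ (Ici 0)) (hψm : StrictMonoOn ψ (Ici 0)) (hψ0 : ψ 0 = 0)
    (hφtop : Tendsto φ atTop atTop)
    (hratio : ∀ s t : ℝ, 0 < s → s ≤ t → ψ s / φ s ≤ ψ t / φ t)
    (hinv : ∀ s : ℝ, 0 ≤ s → ψinv (ψ s) = s)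
    (n : ℕ) (hn : 1 ≤ n) (V : Fin n → Ω → E)
    (hmeas : ∀ i, Measurable (V i))
    (hindep : iIndepFun V P)
    (hsymm : ∀ i, Measure.map (fun ω => -(V i ω)) P = Measure.map (V i) P) :
    ∀ t : ℝ, 0 ≤ t →
      P {ω | t * ψ n < ‖∑ i, V i ω‖} ≤
        4 * P {ω | t * φ n < ‖∑ i, φ (ψinv ‖V i ω‖) • ‖V i ω‖⁻¹ • V i ω‖} +
          ∑ i, P {ω | ψ n < ‖V i ω‖} := by
  intro t _
  have hn0 : (0 : ℝ) < n := by exact_mod_cast hn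
  have hsurj : SurjOn ψ (Ici 0) (Ici 0) :=
    surjOn_Ici_zero_of_tendsto_atTop hψc hψ0 <|
      tendsto_atTop_of_monotone_ratio hφtop hratio <|
        div_pos (hψm.pos_of_map_zero hψ0 one_pos) (hφm.pos_of_map_zero hφ0 one_pos)
  have hmaps : MapsTo ψinv (Ici 0) (Ici 0) := LeftInvOn.mapsTo hinv hsurj
  have hright : RightInvOn ψinv ψ (Ici 0) := (LeftInvOn.rightInvOn_image hinv).mono hsurj
  have hg := monotoneOn_comp_rightInvOn hφm hψm hmaps hright
  obtain ⟨κ, hκ, hκ01, hκneg, hκh⟩ := exists_weight_smul_eq (E := E) hg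
    (fun r hr => hφm.pos_of_map_zero hφ0 (rightInvOn_pos hψm hψ0 hmaps hright hr))
    (hφm.pos_of_map_zero hφ0 hn0) (hψm.pos_of_map_zero hψ0 hn0)
    (fun r hr hrn => div_comp_rightInvOn_le hψm hψ0 hmaps hright hratio hn0.le hr hrn)
  calc P {ω | t * ψ n < ‖∑ i, V i ω‖}
      ≤ 2 * P {ω | t * φ n < ‖∑ i, φ (ψinv ‖V i ω‖) • ‖V i ω‖⁻¹ • V i ω‖} +
          ∑ i, P {ω | ψ n < ‖V i ω‖} :=
        measure_lt_norm_sum_le_of_weight hmeas hindep hsymm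
          (hg.measurable_comp_norm.smul (by fun_prop)) (fun v => by simp) hκ hκ01 hκneg
          (hφm.pos_of_map_zero hφ0 hn0) (hψm.pos_of_map_zero hψ0 hn0) hκh t
    _ ≤ _ := by gcongr; norm_num

/-- Theorem 1.1 (ii): for independent symmetric B-valued V₁,...,Vₙ,
P(‖Σ Vᵢ‖ > t bₙ) ≤ 4 P(‖Σ φ(ψ⁻¹(‖Vᵢ‖)) Vᵢ/‖Vᵢ‖‖ > t aₙ) + Σ P(‖Vᵢ‖ > bₙ),
where aₙ = φ(n), bₙ = ψ(n). -/
theorem stmt4 {Ω : Type*} [MeasurableSpace Ω] (P : Measure Ω) [IsProbabilityMeasure P]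
    {E : Type*} [NormedAddCommGroup E] [NormedSpace ℝ E] [CompleteSpace E]
    [SecondCountableTopology E] [MeasurableSpace E] [BorelSpace E]
    (φ ψ ψinv : ℝ → ℝ)
    (hφc : ContinuousOn φ (Ici 0)) (hφm : StrictMonoOn φ (Ici 0)) (hφ0 : φ 0 = 0)
    (hψc : ContinuousOn ψ (Ici 0)) (hψm : StrictMonoOn ψ (Ici 0)) (hψ0 : ψ 0 = 0)
    (hφtop : Tendsto φ atTop atTop)
    (hratio : ∀ s t : ℝ, 0 < s → s ≤ t → ψ s / φ s ≤ ψ t / φ t)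
    (hinv : ∀ s : ℝ, 0 ≤ s → ψinv (ψ s) = s)
    (n : ℕ) (hn : 1 ≤ n) (V : Fin n → Ω → E)
    (hmeas : ∀ i, Measurable (V i))
    (hindep : iIndepFun V P)
    (hsymm : ∀ i, Measure.map (fun ω => -(V i ω)) P = Measure.map (V i) P) :
    ∀ t : ℝ, 0 ≤ t →
      P {ω | t * ψ n < ‖∑ i, V i ω‖} ≤
        4 * P {ω | t * φ n < ‖∑ i, φ (ψinv ‖V i ω‖) • ‖V i ω‖⁻¹ • V i ω‖} +
          ∑ i, P {ω | ψ n < ‖V i ω‖} :=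
  stmt4_general P φ ψ ψinv hφm hφ0 hψc hψm hψ0 hφtop hratio hinv n hn V hmeas hindep hsymm
end

section
/- Let T_1,...,T_n be independent symmetric B-valued random variables and let a > 0. Then for all t ≥ 0, P(‖Σ_{i=1}^n T_i·1{‖T_i‖ ≤ a}‖ > t) ≤ 2 P(‖Σ_{i=1}^n T_i‖ > t). -/
open MeasureTheory ProbabilityTheory Set

/-! Write `S = ∑ Tᵢ = U + V`, where `U = ∑ Tᵢ 1{‖Tᵢ‖ ≤ a}` and `V` collects the large terms.
Flipping the sign of every large term is a symmetry of each law, so by independence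
`S' = U - V` has the same law as `S`. Since `2U = S + S'`, on `{‖U‖ > t}` one of `‖S‖`, `‖S'‖`
exceeds `t`, and a union bound gives the factor `2`. -/

theorem MeasureTheory.Measure.map_piecewise_id_neg {E : Type*} [MeasurableSpace E]
    [InvolutiveNeg E] [MeasurableNeg E] (μ : Measure E) [μ.IsNegInvariant] {s : Set E}
    [DecidablePred (· ∈ s)] (hs : MeasurableSet s) (hs_neg : -s = s) :
    μ.map (s.piecewise id Neg.neg) = μ := by
  ext A hA
  have hsdiff : Neg.neg ⁻¹' A \ s = Neg.neg ⁻¹' (A \ s) := by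
    rw [preimage_sdiff]; exact congrArg _ hs_neg.symm
  rw [Measure.map_apply (measurable_id.piecewise hs measurable_neg) hA, piecewise_preimage,
    preimage_id, Set.ite,
    measure_union' (disjoint_sdiff_right.mono_left inter_subset_right) (hA.inter hs),
    hsdiff, μ.measure_preimage_neg, measure_inter_add_sdiff A hs]

theorem ProbabilityTheory.identDistrib_piecewise_id_neg {Ω E : Type*} [MeasurableSpace Ω]
    {P : Measure Ω} [MeasurableSpace E] [InvolutiveNeg E] [MeasurableNeg E] {X : Ω → E}
    (hX : Measurable X) (hsymm : P.map (fun ω => -X ω) = P.map X) {s : Set E}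
    [DecidablePred (· ∈ s)] (hs : MeasurableSet s) (hs_neg : -s = s) :
    IdentDistrib (fun ω => s.piecewise id Neg.neg (X ω)) X P P where
  aemeasurable_fst := ((measurable_id.piecewise hs measurable_neg).comp hX).aemeasurable
  aemeasurable_snd := hX.aemeasurable
  map_eq := by
    have : (P.map X).IsNegInvariant :=
      ⟨by rw [Measure.neg, Measure.map_map measurable_neg hX]; exact hsymm⟩
    exact (Measure.map_map (measurable_id.piecewise hs measurable_neg) hX).symm.trans
      (Measure.map_piecewise_id_neg _ hs hs_neg)

theorem norm_le_max_norm_add_norm_sub {E : Type*} [SeminormedAddCommGroup E] [NormedSpace ℝ E]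
    (u v : E) : ‖u‖ ≤ max ‖u + v‖ ‖u - v‖ := by
  have h : (2 : ℝ) • u = (u + v) + (u - v) := by rw [two_smul]; abel
  have := norm_add_le (u + v) (u - v)
  rw [← h, norm_smul, Real.norm_two] at this
  linarith [le_max_left ‖u + v‖ ‖u - v‖, le_max_right ‖u + v‖ ‖u - v‖]

theorem norm_sum_ite_le_max {ι E : Type*} [SeminormedAddCommGroup E] [NormedSpace ℝ E]
    (s : Finset ι) (p : ι → Prop) [DecidablePred p] (f : ι → E) :
    ‖∑ i ∈ s, if p i then f i else 0‖ ≤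
      max ‖∑ i ∈ s, f i‖ ‖∑ i ∈ s, if p i then f i else -f i‖ := by
  set v := ∑ i ∈ s, if p i then 0 else f i
  have hadd : ∑ i ∈ s, f i = (∑ i ∈ s, if p i then f i else 0) + v := by
    rw [← Finset.sum_add_distrib]
    exact Finset.sum_congr rfl fun i _ => by split_ifs <;> simp
  have hsub :
      ∑ i ∈ s, (if p i then f i else -f i) = (∑ i ∈ s, if p i then f i else 0) - v := by
    rw [← Finset.sum_sub_distrib]
    exact Finset.sum_congr rfl fun i _ => by split_ifs <;> simp
  rw [hadd, hsub]
  exact norm_le_max_norm_add_norm_sub _ v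

theorem stmt6_general {Ω : Type*} [MeasurableSpace Ω] (P : Measure Ω)
    {E : Type*} [NormedAddCommGroup E] [NormedSpace ℝ E]
    [SecondCountableTopology E] [MeasurableSpace E] [BorelSpace E]
    (n : ℕ) (T : Fin n → Ω → E) (a : ℝ)
    (hmeas : ∀ i, Measurable (T i))
    (hindep : iIndepFun T P)
    (hsymm : ∀ i, Measure.map (fun ω => -(T i ω)) P = Measure.map (T i) P) :
    ∀ t : ℝ, 0 ≤ t →
      P {ω | t < ‖∑ i, if ‖T i ω‖ ≤ a then T i ω else 0‖} ≤
        2 * P {ω | t < ‖∑ i, T i ω‖} := by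
  intro t _
  set s : Set E := {x | ‖x‖ ≤ a}
  have hs : MeasurableSet s := measurableSet_le measurable_norm measurable_const
  have hs_neg : -s = s := by ext; simp [s]
  set flip : E → E := s.piecewise id Neg.neg
  have hflip : Measurable flip := measurable_id.piecewise hs measurable_neg
  have hlaw : IdentDistrib (fun ω => ∑ i, flip (T i ω)) (fun ω => ∑ i, T i ω) P P :=
    (IdentDistrib.pi (fun i => identDistrib_piecewise_id_neg (hmeas i) (hsymm i) hs hs_neg)
      (hindep.comp _ fun _ => hflip) hindep).comp
      (Finset.measurable_sum _ fun i _ => measurable_pi_apply i)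
  have hsub : {ω | t < ‖∑ i, if ‖T i ω‖ ≤ a then T i ω else 0‖}
      ⊆ {ω | t < ‖∑ i, T i ω‖} ∪ {ω | t < ‖∑ i, flip (T i ω)‖} := fun ω hω =>
    lt_max_iff.mp (hω.out.trans_le (norm_sum_ite_le_max _ (fun i => ‖T i ω‖ ≤ a) (T · ω)))
  have hflip_eq : P {ω | t < ‖∑ i, flip (T i ω)‖} = P {ω | t < ‖∑ i, T i ω‖} :=
    hlaw.measure_mem_eq (measurableSet_lt measurable_const measurable_norm)
  calc P {ω | t < ‖∑ i, if ‖T i ω‖ ≤ a then T i ω else 0‖}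
      ≤ P {ω | t < ‖∑ i, T i ω‖} + P {ω | t < ‖∑ i, flip (T i ω)‖} :=
        (measure_mono hsub).trans (measure_union_le _ _)
    _ = 2 * P {ω | t < ‖∑ i, T i ω‖} := by rw [hflip_eq, two_mul]

/-- For independent symmetric T₁,...,Tₙ and a > 0,
P(‖Σ Tᵢ 1{‖Tᵢ‖≤a}‖ > t) ≤ 2 P(‖Σ Tᵢ‖ > t). -/
theorem stmt6 {Ω : Type*} [MeasurableSpace Ω] (P : Measure Ω) [IsProbabilityMeasure P]
    {E : Type*} [NormedAddCommGroup E] [NormedSpace ℝ E] [CompleteSpace E]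
    [SecondCountableTopology E] [MeasurableSpace E] [BorelSpace E]
    (n : ℕ) (T : Fin n → Ω → E) (a : ℝ) (ha : 0 < a)
    (hmeas : ∀ i, Measurable (T i))
    (hindep : iIndepFun T P)
    (hsymm : ∀ i, Measure.map (fun ω => -(T i ω)) P = Measure.map (T i) P) :
    ∀ t : ℝ, 0 ≤ t →
      P {ω | t < ‖∑ i, if ‖T i ω‖ ≤ a then T i ω else 0‖} ≤
        2 * P {ω | t < ‖∑ i, T i ω‖} :=
  stmt6_general P n T a hmeas hindep hsymm
end

section
/- Let {X, X_n; n ≥ 1} be i.i.d. real-valued random variables with S_n = Σ_{i=1}^n X_i, and let {b_n} be increasing positive reals with b_n → ∞. If limsup_{n→∞} n P(|X| > b_n) > 0, then for every λ > 0, limsup_{n→∞} P(|S_n − n E[X·1{|X| ≤ b_n}]| / b_n > λ) > 0; in particular (S_n − n E[X·1{|X| ≤ b_n}])/b_n does not converge to 0 in probability. -/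
/-!
Symmetrize: for an independent copy `X'` of the sequence, `Yᵢ = Xᵢ - X'ᵢ` are i.i.d. and
symmetric, and `∑_{i<n} Yᵢ = (Sₙ - κ) - (S'ₙ - κ)` for every centering `κ`, so
`P(∑ Yᵢ > 2λbₙ) ≤ 2 P(|Sₙ - κ| > λbₙ)` and the centering plays no role. Fix `u` with
`P(|X| > u) ≤ 1/2` and put `a = bₙ - u`, `q = P(Y > a)`. The weak symmetrization inequality
`P(|X| > bₙ) ≤ 4q` turns `n P(|X| > bₙ) ≥ c` (infinitely often) into `nq ≥ c/4`, while `q → 0`.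

Take `m ≥ 4λ` and `ℓ ≈ c/(8q) ≤ n`. For `I ⊆ {0, …, ℓ-1}` with `|I| = m`, consider the event that
`Yᵢ > a` exactly for `i ∈ I` among the first `ℓ` indices, `|Yᵢ| ≤ a` for the others, and the sum of
the `Yᵢ` with `i < n`, `i ∉ I`, is nonnegative. These events are disjoint, on each of them
`∑ Yᵢ ≥ ma > 2λbₙ`, and by independence and symmetry each has probability at least
`q^m (1-2q)^(ℓ-m) / 2`. Hence `P(∑ Yᵢ > 2λbₙ) ≥ C(ℓ,m) q^m (1-2q)^(ℓ-m) / 2`, which the choice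
of `ℓ` bounds below by a constant depending only on `c` and `m`.
-/

open MeasureTheory ProbabilityTheory Set Filter Topology

lemma measurable_iSup_comap {ι β γ : Type*} [MeasurableSpace γ] {Y : ι → β → γ} {S : Set ι}
    {i : ι} (hi : i ∈ S) : Measurable[⨆ j ∈ S, MeasurableSpace.comap (Y j) inferInstance] (Y i) :=
  measurable_iff_comap_le.mpr (le_iSup₂ (f := fun j (_ : j ∈ S) =>
    MeasurableSpace.comap (Y j) inferInstance) i hi)

lemma ProbabilityTheory.iIndepFun.prodMap {ι Ω Ω' β γ : Type*} [MeasurableSpace Ω]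
    [MeasurableSpace Ω'] [MeasurableSpace β] [MeasurableSpace γ]
    {μ : Measure Ω} {ν : Measure Ω'} [IsProbabilityMeasure μ] [IsProbabilityMeasure ν]
    {X : ι → Ω → β} {Z : ι → Ω' → γ} (hX : ∀ i, Measurable (X i)) (hZ : ∀ i, Measurable (Z i))
    (hXind : iIndepFun X μ) (hZind : iIndepFun Z ν) :
    iIndepFun (fun i => Prod.map (X i) (Z i)) (μ.prod ν) := by
  let boxes : Set (Set (β × γ)) :=
    image2 (· ×ˢ ·) {s : Set β | MeasurableSet s} {t : Set γ | MeasurableSet t}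
  have h_generate : ∀ i, MeasurableSpace.comap (Prod.map (X i) (Z i)) inferInstance =
      MeasurableSpace.generateFrom (preimage (Prod.map (X i) (Z i)) '' boxes) := fun i => by
    rw [← generateFrom_prod, MeasurableSpace.comap_generateFrom]
  rw [iIndepFun_iff_iIndep]
  refine iIndepSets.iIndep (fun i => ((hX i).prodMap (hZ i)).comap_le) _
    (fun i => isPiSystem_prod.comap _) h_generate ?_
  rw [iIndepSets_iff]
  intro s f hf
  have hbox : ∀ i ∈ s, ∃ u v, MeasurableSet u ∧ MeasurableSet v ∧
      f i = (X i ⁻¹' u) ×ˢ (Z i ⁻¹' v) := by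
    intro i hi
    obtain ⟨_, ⟨u, hu, v, hv, rfl⟩, hfi⟩ := hf i hi
    exact ⟨u, v, hu, hv, by rw [← hfi]; rfl⟩
  choose! u v hu hv hfuv using hbox
  have hinter : ⋂ i ∈ s, f i = (⋂ i ∈ s, X i ⁻¹' u i) ×ˢ (⋂ i ∈ s, Z i ⁻¹' v i) := by
    rw [iInter₂_congr hfuv]
    ext p
    simp only [mem_iInter, mem_prod, forall_and]
  rw [hinter, Measure.prod_prod, hXind.meas_biInter fun i hi => ⟨u i, hu i hi, rfl⟩,
    hZind.meas_biInter fun i hi => ⟨v i, hv i hi, rfl⟩, ← Finset.prod_mul_distrib]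
  exact Finset.prod_congr rfl fun i hi => by rw [hfuv i hi, Measure.prod_prod]

lemma tendsto_measureReal_lt_abs_atTop {α : Type*} [MeasurableSpace α] (μ : Measure α)
    [IsFiniteMeasure μ] {W : α → ℝ} (hW : Measurable W) :
    Tendsto (fun t : ℝ => μ.real {x | t < |W x|}) atTop (𝓝 0) := by
  have hempty : ⋂ t : ℝ, {x | t < |W x|} = ∅ :=
    iInter_eq_empty_iff.mpr fun x => ⟨|W x|, lt_irrefl (|W x|)⟩
  have := tendsto_measure_iInter_atTop (μ := μ)
    (fun t => (measurableSet_lt measurable_const hW.abs).nullMeasurableSet)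
    (fun t t' htt' x (hx : t' < |W x|) => show t < |W x| from htt'.trans_lt hx)
    ⟨0, measure_ne_top _ _⟩
  rw [hempty, measure_empty] at this
  exact (ENNReal.tendsto_toReal ENNReal.zero_ne_top).comp this

lemma exists_frequently_ofReal_le_of_pos_limsup {ι : Type*} {l : Filter ι} {v : ι → ENNReal}
    (h : 0 < limsup v l) : ∃ c : ℝ, 0 < c ∧ c ≤ 1 ∧ ∃ᶠ i in l, ENNReal.ofReal c ≤ v i := by
  obtain ⟨r, hr0, hr⟩ := exists_between h
  have hr_top : r ≠ ⊤ := (hr.trans_le le_top).ne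
  refine ⟨min r.toReal 1, lt_min (ENNReal.toReal_pos hr0.ne' hr_top) one_pos, min_le_right _ _,
    (frequently_lt_of_lt_limsup (by isBoundedDefault) hr).mono fun i hi => ?_⟩
  calc ENNReal.ofReal (min r.toReal 1) ≤ ENNReal.ofReal r.toReal := by gcongr; exact min_le_left _ _
    _ = r := ENNReal.ofReal_toReal hr_top
    _ ≤ v i := hi.le

lemma not_tendstoInMeasure_of_limsup_pos {Ω : Type*} [MeasurableSpace Ω] {μ : Measure Ω}
    {f : ℕ → Ω → ℝ} {b : ℕ → ℝ} (hb : ∀ n, 0 < b n)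
    (h : 0 < limsup (fun n => μ {ω | b n < |f n ω|}) atTop) :
    ¬ TendstoInMeasure μ (fun n ω => (b n)⁻¹ * f n ω) atTop 0 := by
  intro hconv
  have hsub : ∀ n, {ω | b n < |f n ω|} ⊆ {ω | 1 ≤ dist ((b n)⁻¹ * f n ω) ((0 : Ω → ℝ) ω)} := by
    intro n ω hω
    simp only [mem_ofPred_eq, Pi.zero_apply, Real.dist_eq, sub_zero, abs_mul, abs_inv,
      abs_of_pos (hb n)] at hω ⊢
    rw [le_inv_mul_iff₀ (hb n), mul_one]
    exact hω.le
  have hzero := ((tendstoInMeasure_iff_dist.mp hconv) 1 one_pos).limsup_eq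
  exact h.not_ge (hzero ▸ limsup_le_limsup (.of_forall fun n => measure_mono (hsub n)))

section SignFlip

variable {β : Type*} [MeasurableSpace β] {μ : Measure β} {σ : β → β}

lemma measure_le_two_mul_measure_inter_nonneg (hσ : MeasurePreserving σ μ μ) {A : Set β}
    (hA : MeasurableSet A) (hAσ : σ ⁻¹' A = A) {g : β → ℝ} (hg : Measurable g)
    (hgσ : ∀ x, g (σ x) = -g x) : μ A ≤ 2 * μ (A ∩ {x | 0 ≤ g x}) := by
  have hmeas : MeasurableSet (A ∩ {x | 0 ≤ g x}) := hA.inter (measurableSet_le measurable_const hg)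
  have hpre : σ ⁻¹' (A ∩ {x | 0 ≤ g x}) = A ∩ {x | g x ≤ 0} := by
    ext x
    simp only [preimage_inter, hAσ, mem_inter_iff, mem_preimage, mem_ofPred_eq, hgσ,
      neg_nonneg]
  calc μ A ≤ μ (A ∩ {x | 0 ≤ g x} ∪ A ∩ {x | g x ≤ 0}) :=
        measure_mono fun x hx => (le_total 0 (g x)).imp (⟨hx, ·⟩) (⟨hx, ·⟩)
    _ ≤ μ (A ∩ {x | 0 ≤ g x}) + μ (σ ⁻¹' (A ∩ {x | 0 ≤ g x})) := by
        rw [hpre]; exact measure_union_le _ _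
    _ = 2 * μ (A ∩ {x | 0 ≤ g x}) := by
        rw [hσ.measure_preimage hmeas.nullMeasurableSet, two_mul]

lemma measure_lt_abs_le_two_mul (hσ : MeasurePreserving σ μ μ) {W : β → ℝ} (hW : Measurable W)
    (hWσ : ∀ x, W (σ x) = -W x) (a : ℝ) : μ {x | a < |W x|} ≤ 2 * μ {x | a < W x} := by
  have hpre : σ ⁻¹' {x | a < W x} = {x | W x < -a} := by
    ext x
    simp only [mem_preimage, mem_ofPred_eq, hWσ, lt_neg]
  calc μ {x | a < |W x|} ≤ μ ({x | a < W x} ∪ σ ⁻¹' {x | a < W x}) := by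
        refine measure_mono fun x hx => ?_
        rw [hpre]
        rcases lt_abs.mp (show a < |W x| from hx) with h | h
        exacts [Or.inl h, Or.inr (show W x < -a by linarith)]
    _ ≤ μ {x | a < W x} + μ (σ ⁻¹' {x | a < W x}) := measure_union_le _ _
    _ = 2 * μ {x | a < W x} := by
        rw [hσ.measure_preimage (measurableSet_lt measurable_const hW).nullMeasurableSet,
          two_mul]

end SignFlip

lemma pow_le_factorial_mul_choose_mul_pow {ℓ m : ℕ} {q r : ℝ} (hq : 0 ≤ q) (hr : 0 ≤ r)
    (h : r ≤ ((ℓ + 1 - m : ℕ) : ℝ) * q) : r ^ m ≤ m.factorial * (ℓ.choose m * q ^ m) := by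
  have hdesc : ((ℓ + 1 - m : ℕ) : ℝ) ^ m ≤ m.factorial * ℓ.choose m := by
    exact_mod_cast Nat.descFactorial_eq_factorial_mul_choose ℓ m ▸
      Nat.pow_sub_le_descFactorial ℓ m
  calc r ^ m ≤ (((ℓ + 1 - m : ℕ) : ℝ) * q) ^ m := by gcongr
    _ ≤ m.factorial * ℓ.choose m * q ^ m := by rw [mul_pow]; gcongr
    _ = m.factorial * (ℓ.choose m * q ^ m) := by ring

lemma exists_le_choose_mul_pow_mul_pow {c q : ℝ} {m n : ℕ} (hc0 : 0 < c) (hc1 : c ≤ 1)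
    (hm : 1 ≤ m) (hqm : 16 * m * q ≤ c) (hqn : c ≤ 4 * n * q) :
    ∃ ℓ, m ≤ ℓ ∧ ℓ ≤ n ∧
      (c / 16) ^ m / (2 * m.factorial) ≤ ℓ.choose m * (q ^ m * (1 - 2 * q) ^ (ℓ - m)) := by
  have hm' : (1 : ℝ) ≤ m := by exact_mod_cast hm
  have hq : 0 < q := by
    by_contra! h
    nlinarith [n.cast_nonneg (α := ℝ)]
  set ℓ := ⌈c / (8 * q)⌉₊
  have hℓ_ge : c / 8 ≤ ℓ * q := by
    have := Nat.le_ceil (c / (8 * q))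
    rw [div_le_iff₀ (by positivity)] at this
    linarith
  have hℓ_lt : ℓ * q < c / 8 + q := by
    have := Nat.ceil_lt_add_one (show 0 ≤ c / (8 * q) by positivity)
    rw [← sub_lt_iff_lt_add, lt_div_iff₀ (by positivity)] at this
    linarith
  have hmℓ : m ≤ ℓ := by
    have : (m : ℝ) * q ≤ ℓ * q := by linarith
    exact_mod_cast le_of_mul_le_mul_right this hq
  have hℓn : ℓ ≤ n := by
    have : (ℓ : ℝ) * q < n * q := by nlinarith
    exact_mod_cast (lt_of_mul_lt_mul_right this hq.le).le
  refine ⟨ℓ, hmℓ, hℓn, ?_⟩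
  have hchoose : (c / 16) ^ m ≤ m.factorial * (ℓ.choose m * q ^ m) := by
    refine pow_le_factorial_mul_choose_mul_pow hq.le (by positivity) ?_
    rw [Nat.cast_sub (by omega)]
    push_cast
    nlinarith
  have hbernoulli : 1 / 2 ≤ (1 - 2 * q) ^ (ℓ - m) := by
    have hsub : ((ℓ - m : ℕ) : ℝ) ≤ ℓ := by exact_mod_cast Nat.sub_le ℓ m
    have := one_add_mul_le_pow (show (-2 : ℝ) ≤ -(2 * q) by nlinarith) (ℓ - m)
    rw [← sub_eq_add_neg] at this
    nlinarith
  calc (c / 16) ^ m / (2 * m.factorial) ≤ ℓ.choose m * q ^ m * (1 / 2) := by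
        rw [div_le_iff₀ (by positivity)]
        nlinarith
    _ ≤ ℓ.choose m * q ^ m * (1 - 2 * q) ^ (ℓ - m) := by gcongr
    _ = ℓ.choose m * (q ^ m * (1 - 2 * q) ^ (ℓ - m)) := by ring

section Exceedances

variable {β : Type*} {Y : ℕ → β → ℝ} {a : ℝ} {ℓ n : ℕ}

def exceedanceEvent (Y : ℕ → β → ℝ) (a : ℝ) (ℓ n : ℕ) (I : Finset ℕ) : Set β :=
  (⋂ i ∈ I, {x | a < Y i x}) ∩
    ((⋂ i ∈ Finset.range ℓ \ I, {x | |Y i x| ≤ a}) ∩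
      {x | 0 ≤ ∑ i ∈ Finset.range n \ I, Y i x})

lemma exceedanceEvent_subset {I : Finset ℕ} (hI : I ⊆ Finset.range n) :
    exceedanceEvent Y a ℓ n I ⊆ {x | I.card * a ≤ ∑ i ∈ Finset.range n, Y i x} := by
  rintro x ⟨hexceed, -, hrest⟩
  simp only [mem_iInter, mem_ofPred_eq] at hexceed hrest ⊢
  have hsumI : I.card * a ≤ ∑ i ∈ I, Y i x := by
    simpa using Finset.card_nsmul_le_sum I (Y · x) a fun i hi => (hexceed i hi).le
  rw [← Finset.sum_sdiff hI]
  linarith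

lemma pairwiseDisjoint_exceedanceEvent (m : ℕ) :
    (Finset.powersetCard m (Finset.range ℓ) : Set (Finset ℕ)).PairwiseDisjoint
      (exceedanceEvent Y a ℓ n) := by
  intro I hI J hJ hIJ
  rw [Finset.mem_coe, Finset.mem_powersetCard] at hI hJ
  obtain ⟨i, hiI, hiJ⟩ : ∃ i ∈ I, i ∉ J := Finset.not_subset.mp fun hsub =>
    hIJ (Finset.eq_of_subset_of_card_le hsub (by omega))
  refine Set.disjoint_left.mpr fun x hxI hxJ => ?_
  have hlarge : a < Y i x := mem_iInter₂.mp hxI.1 i hiI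
  have hsmall : |Y i x| ≤ a :=
    mem_iInter₂.mp hxJ.2.1 i (Finset.mem_sdiff.mpr ⟨hI.1 hiI, hiJ⟩)
  linarith [le_abs_self (Y i x)]

lemma measurableSet_exceedanceEvent [MeasurableSpace β] (hY : ∀ i, Measurable (Y i))
    (I : Finset ℕ) :
    MeasurableSet (exceedanceEvent Y a ℓ n I) := by
  unfold exceedanceEvent
  refine .inter (.biInter (to_countable _) fun i _ => measurableSet_lt measurable_const (hY i))
    (.inter (.biInter (to_countable _) fun i _ => measurableSet_le (hY i).abs measurable_const)
      (measurableSet_le measurable_const (Finset.measurable_sum _ fun i _ => hY i)))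

variable [MeasurableSpace β] {μ : Measure β} {σ : β → β}

lemma measure_exceedanceEvent_eq_mul (hY : ∀ i, Measurable (Y i)) (hind : iIndepFun Y μ)
    (hlaw : ∀ i, IdentDistrib (Y i) (Y 0) μ μ) (I : Finset ℕ) (hℓn : ℓ ≤ n) :
    μ (exceedanceEvent Y a ℓ n I) = μ {x | a < Y 0 x} ^ I.card *
      μ ((⋂ i ∈ Finset.range ℓ \ I, {x | |Y i x| ≤ a}) ∩
        {x | 0 ≤ ∑ i ∈ Finset.range n \ I, Y i x}) := by
  set T : Set ℕ := ↑(Finset.range n \ I)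
  have hindep : Indep (⨆ i ∈ (I : Set ℕ), MeasurableSpace.comap (Y i) inferInstance)
      (⨆ i ∈ T, MeasurableSpace.comap (Y i) inferInstance) μ :=
    indep_iSup_of_disjoint (fun i => (hY i).comap_le) hind.iIndep
      (Finset.disjoint_coe.mpr Finset.disjoint_sdiff)
  have hsub : ∀ i ∈ Finset.range ℓ \ I, i ∈ T := fun i hi => by
    simp only [T, Finset.coe_sdiff, Finset.coe_range, Finset.mem_sdiff, Finset.mem_range,
      Set.mem_sdiff, mem_Iio] at hi ⊢
    exact ⟨by omega, hi.2⟩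
  have hsum : Measurable[⨆ j ∈ T, MeasurableSpace.comap (Y j) inferInstance]
      fun x => ∑ i ∈ Finset.range n \ I, Y i x :=
    Finset.measurable_sum _ fun i hi => measurable_iSup_comap (Finset.mem_coe.mpr hi)
  have hA : MeasurableSet[⨆ i ∈ (I : Set ℕ), MeasurableSpace.comap (Y i) inferInstance]
      (⋂ i ∈ I, {x | a < Y i x}) :=
    .biInter (to_countable _) fun i hi => measurableSet_lt measurable_const
      (measurable_iSup_comap hi)
  have hrest : MeasurableSet[⨆ i ∈ T, MeasurableSpace.comap (Y i) inferInstance]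
      ((⋂ i ∈ Finset.range ℓ \ I, {x | |Y i x| ≤ a}) ∩
        {x | 0 ≤ ∑ i ∈ Finset.range n \ I, Y i x}) :=
    .inter (.biInter (to_countable _) fun i hi => measurableSet_le
      (measurable_abs.comp (measurable_iSup_comap (hsub i hi))) measurable_const)
      (measurableSet_le measurable_const hsum)
  rw [exceedanceEvent, (Indep_iff _ _ μ).mp hindep _ _ hA hrest]
  congr 1
  calc μ (⋂ i ∈ I, Y i ⁻¹' Ioi a) = ∏ i ∈ I, μ (Y i ⁻¹' Ioi a) :=
        hind.meas_biInter fun i _ => ⟨Ioi a, measurableSet_Ioi, rfl⟩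
    _ = μ {x | a < Y 0 x} ^ I.card := by
        rw [Finset.prod_congr rfl fun i _ => (hlaw i).measure_mem_eq measurableSet_Ioi,
          Finset.prod_const]
        rfl

lemma pow_mul_pow_le_two_mul_measure_exceedanceEvent (hY : ∀ i, Measurable (Y i))
    (hind : iIndepFun Y μ) (hlaw : ∀ i, IdentDistrib (Y i) (Y 0) μ μ)
    (hσ : MeasurePreserving σ μ μ) (hYσ : ∀ i x, Y i (σ x) = -Y i x)
    {I : Finset ℕ} (hI : I ⊆ Finset.range ℓ) (hℓn : ℓ ≤ n) :
    μ {x | a < Y 0 x} ^ I.card * μ {x | |Y 0 x| ≤ a} ^ (ℓ - I.card) ≤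
      2 * μ (exceedanceEvent Y a ℓ n I) := by
  set B := ⋂ i ∈ Finset.range ℓ \ I, {x | |Y i x| ≤ a}
  have hB : μ B = μ {x | |Y 0 x| ≤ a} ^ (ℓ - I.card) := by
    have hM : MeasurableSet {y : ℝ | |y| ≤ a} := measurableSet_le measurable_abs measurable_const
    calc μ B = ∏ i ∈ Finset.range ℓ \ I, μ (Y i ⁻¹' {y | |y| ≤ a}) :=
          hind.meas_biInter fun i _ => ⟨_, hM, rfl⟩
      _ = μ {x | |Y 0 x| ≤ a} ^ (ℓ - I.card) := by
          rw [Finset.prod_congr rfl fun i _ => (hlaw i).measure_mem_eq hM, Finset.prod_const,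
            Finset.card_sdiff_of_subset hI, Finset.card_range]
          rfl
  have hhalf : μ B ≤ 2 * μ (B ∩ {x | 0 ≤ ∑ i ∈ Finset.range n \ I, Y i x}) := by
    refine measure_le_two_mul_measure_inter_nonneg hσ
      (.biInter (to_countable _) fun i _ => measurableSet_le (hY i).abs measurable_const) ?_
      (Finset.measurable_sum _ fun i _ => hY i) fun x => ?_
    · ext x
      simp only [mem_preimage, mem_iInter, mem_ofPred_eq, hYσ, abs_neg]
    · simp only [hYσ, Finset.sum_neg_distrib]
  rw [measure_exceedanceEvent_eq_mul hY hind hlaw I hℓn, ← hB, mul_left_comm]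
  gcongr

lemma choose_mul_le_two_mul_measure_le_sum (hY : ∀ i, Measurable (Y i))
    (hind : iIndepFun Y μ) (hlaw : ∀ i, IdentDistrib (Y i) (Y 0) μ μ)
    (hσ : MeasurePreserving σ μ μ) (hYσ : ∀ i x, Y i (σ x) = -Y i x) (m : ℕ) (hℓn : ℓ ≤ n) :
    ℓ.choose m * (μ {x | a < Y 0 x} ^ m * μ {x | |Y 0 x| ≤ a} ^ (ℓ - m)) ≤
      2 * μ {x | m * a ≤ ∑ i ∈ Finset.range n, Y i x} := by
  set 𝓘 := Finset.powersetCard m (Finset.range ℓ)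
  have hbound : ∀ I ∈ 𝓘, μ {x | a < Y 0 x} ^ m * μ {x | |Y 0 x| ≤ a} ^ (ℓ - m) ≤
      2 * μ (exceedanceEvent Y a ℓ n I) := by
    intro I hI
    obtain ⟨hIℓ, rfl⟩ := Finset.mem_powersetCard.mp hI
    exact pow_mul_pow_le_two_mul_measure_exceedanceEvent hY hind hlaw hσ hYσ hIℓ hℓn
  have hunion : ⋃ I ∈ 𝓘, exceedanceEvent Y a ℓ n I ⊆
      {x | m * a ≤ ∑ i ∈ Finset.range n, Y i x} := by
    refine iUnion₂_subset fun I hI => ?_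
    obtain ⟨hIℓ, rfl⟩ := Finset.mem_powersetCard.mp hI
    exact exceedanceEvent_subset (hIℓ.trans (Finset.range_subset_range.mpr hℓn))
  calc ℓ.choose m * (μ {x | a < Y 0 x} ^ m * μ {x | |Y 0 x| ≤ a} ^ (ℓ - m))
      = ∑ I ∈ 𝓘, μ {x | a < Y 0 x} ^ m * μ {x | |Y 0 x| ≤ a} ^ (ℓ - m) := by
        rw [Finset.sum_const, Finset.card_powersetCard, Finset.card_range, nsmul_eq_mul]
    _ ≤ ∑ I ∈ 𝓘, 2 * μ (exceedanceEvent Y a ℓ n I) := Finset.sum_le_sum hbound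
    _ = 2 * μ (⋃ I ∈ 𝓘, exceedanceEvent Y a ℓ n I) := by
        rw [← Finset.mul_sum, measure_biUnion_finset (pairwiseDisjoint_exceedanceEvent m)
          fun I _ => measurableSet_exceedanceEvent hY I]
    _ ≤ 2 * μ {x | m * a ≤ ∑ i ∈ Finset.range n, Y i x} := by gcongr


lemma pow_div_factorial_le_measureReal_mul_le_sum [IsProbabilityMeasure μ]
    (hY : ∀ i, Measurable (Y i)) (hind : iIndepFun Y μ) (hlaw : ∀ i, IdentDistrib (Y i) (Y 0) μ μ)
    (hσ : MeasurePreserving σ μ μ) (hYσ : ∀ i x, Y i (σ x) = -Y i x) {c : ℝ} {m : ℕ}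
    (hc0 : 0 < c) (hc1 : c ≤ 1) (hm : 1 ≤ m) (hqm : 16 * m * μ.real {x | a < Y 0 x} ≤ c)
    (hqn : c ≤ 4 * n * μ.real {x | a < Y 0 x}) :
    (c / 16) ^ m / (4 * m.factorial) ≤ μ.real {x | m * a ≤ ∑ i ∈ Finset.range n, Y i x} := by
  set q := μ.real {x | a < Y 0 x}
  obtain ⟨ℓ, -, hℓn, hδ⟩ := exists_le_choose_mul_pow_mul_pow hc0 hc1 hm hqm hqn
  have habs : μ.real {x | a < |Y 0 x|} ≤ 2 * q := by
    have := ENNReal.toReal_mono (by finiteness) (measure_lt_abs_le_two_mul hσ (hY 0) (hYσ 0) a)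
    rwa [ENNReal.toReal_mul, ENNReal.toReal_ofNat] at this
  have hs : 1 - 2 * q ≤ μ.real {x | |Y 0 x| ≤ a} := by
    have hcompl : {x | |Y 0 x| ≤ a} = {x | a < |Y 0 x|}ᶜ := by ext; simp
    rw [hcompl, measureReal_compl (measurableSet_lt measurable_const (hY 0).abs), probReal_univ]
    linarith
  have hq2 : 0 ≤ 1 - 2 * q := by nlinarith [(show (1 : ℝ) ≤ m by exact_mod_cast hm)]
  have hblocks : ℓ.choose m * (q ^ m * μ.real {x | |Y 0 x| ≤ a} ^ (ℓ - m)) ≤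
      2 * μ.real {x | m * a ≤ ∑ i ∈ Finset.range n, Y i x} := by
    have := ENNReal.toReal_mono (by finiteness)
      (choose_mul_le_two_mul_measure_le_sum hY hind hlaw hσ hYσ m hℓn)
    simpa only [ENNReal.toReal_mul, ENNReal.toReal_pow, ENNReal.toReal_natCast,
      ENNReal.toReal_ofNat, ← measureReal_def] using this
  calc (c / 16) ^ m / (4 * m.factorial) = (c / 16) ^ m / (2 * m.factorial) / 2 := by ring
    _ ≤ ℓ.choose m * (q ^ m * (1 - 2 * q) ^ (ℓ - m)) / 2 := by gcongr
    _ ≤ ℓ.choose m * (q ^ m * μ.real {x | |Y 0 x| ≤ a} ^ (ℓ - m)) / 2 := by gcongr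
    _ ≤ μ.real {x | m * a ≤ ∑ i ∈ Finset.range n, Y i x} := by linarith

end Exceedances

section IndependentCopy

variable {Ω : Type*} [MeasurableSpace Ω] {μ : Measure Ω} [IsProbabilityMeasure μ] {f : Ω → ℝ}

lemma measureReal_lt_abs_le_four_mul_measureReal_prod (hf : Measurable f) {t u : ℝ}
    (hu : μ.real {ω | u < |f ω|} ≤ 1 / 2) :
    μ.real {ω | t < |f ω|} ≤ 4 * (μ.prod μ).real {p | t - u < f p.1 - f p.2} := by
  set S := {p : Ω × Ω | t - u < f p.1 - f p.2}
  have hbody : 1 / 2 ≤ μ.real {ω | |f ω| ≤ u} := by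
    have hcompl : {ω | |f ω| ≤ u} = {ω | u < |f ω|}ᶜ := by ext; simp
    rw [hcompl, measureReal_compl (measurableSet_lt measurable_const hf.abs), probReal_univ]
    linarith
  have hupper : μ.real {ω | t < f ω} * μ.real {ω | |f ω| ≤ u} ≤ (μ.prod μ).real S := by
    rw [← measureReal_prod_prod]
    refine measureReal_mono fun p ⟨h1, h2⟩ => ?_
    simp only [S, mem_ofPred_eq] at h1 h2 ⊢
    linarith [le_abs_self (f p.2)]
  have hlower : μ.real {ω | |f ω| ≤ u} * μ.real {ω | f ω < -t} ≤ (μ.prod μ).real S := by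
    rw [← measureReal_prod_prod]
    refine measureReal_mono fun p ⟨h1, h2⟩ => ?_
    simp only [S, mem_ofPred_eq] at h1 h2 ⊢
    linarith [neg_abs_le (f p.1)]
  have hsplit : μ.real {ω | t < |f ω|} ≤ μ.real {ω | t < f ω} + μ.real {ω | f ω < -t} := by
    refine (measureReal_mono fun ω (hω : t < |f ω|) => ?_).trans (measureReal_union_le _ _)
    rcases lt_abs.mp hω with h | h
    exacts [Or.inl h, Or.inr (show f ω < -t by linarith)]
  nlinarith [measureReal_nonneg (μ := μ) (s := {ω | t < f ω}),
    measureReal_nonneg (μ := μ) (s := {ω | f ω < -t})]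

lemma measureReal_prod_lt_sub_le_two_mul (x : ℝ) :
    (μ.prod μ).real {p | 2 * x < f p.1 - f p.2} ≤ 2 * μ.real {ω | x < |f ω|} := by
  set G := {ω | x < |f ω|}
  have hsub : {p : Ω × Ω | 2 * x < f p.1 - f p.2} ⊆ G ×ˢ univ ∪ univ ×ˢ G := by
    intro p hp
    by_contra hout
    simp only [G, mem_union, mem_prod, mem_univ, and_true, true_and, not_or, mem_ofPred_eq,
      not_lt] at hout hp
    linarith [abs_le.mp hout.1, abs_le.mp hout.2]
  calc (μ.prod μ).real {p | 2 * x < f p.1 - f p.2}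
      ≤ (μ.prod μ).real (G ×ˢ univ) + (μ.prod μ).real (univ ×ˢ G) :=
        (measureReal_mono hsub).trans (measureReal_union_le _ _)
    _ = 2 * μ.real G := by
        rw [measureReal_prod_prod, measureReal_prod_prod, probReal_univ]; ring

end IndependentCopy

section IID

variable {Ω : Type*} [MeasurableSpace Ω] {P : Measure Ω} [IsProbabilityMeasure P]
  {X : ℕ → Ω → ℝ}

lemma identDistrib_sub_fst_snd (hmeas : ∀ i, Measurable (X i))
    (hident : ∀ i, Measure.map (X i) P = Measure.map (X 0) P) (i : ℕ) :
    IdentDistrib (fun p : Ω × Ω => X i p.1 - X i p.2) (fun p => X 0 p.1 - X 0 p.2)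
      (P.prod P) (P.prod P) where
  aemeasurable_fst :=
    (((hmeas i).comp measurable_fst).sub ((hmeas i).comp measurable_snd)).aemeasurable
  aemeasurable_snd :=
    (((hmeas 0).comp measurable_fst).sub ((hmeas 0).comp measurable_snd)).aemeasurable
  map_eq := by
    have hsub : Measurable fun z : ℝ × ℝ => z.1 - z.2 := measurable_fst.sub measurable_snd
    have hlaw : ∀ j, (P.prod P).map (fun p => X j p.1 - X j p.2) =
        ((P.map (X j)).prod (P.map (X j))).map fun z => z.1 - z.2 := fun j => by
      rw [Measure.map_prod_map _ _ (hmeas j) (hmeas j),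
        Measure.map_map hsub ((hmeas j).prodMap (hmeas j))]
      rfl
    rw [hlaw, hlaw, hident i]

lemma ofReal_le_measure_lt_abs_sum_sub (hmeas : ∀ i, Measurable (X i)) (hindep : iIndepFun X P)
    (hident : ∀ i, Measure.map (X i) P = Measure.map (X 0) P) {c u t x : ℝ} {m n : ℕ}
    (hc0 : 0 < c) (hc1 : c ≤ 1) (hm : 1 ≤ m) (hu : P.real {ω | u < |X 0 ω|} ≤ 1 / 2)
    (htail : ENNReal.ofReal c ≤ n * P {ω | t < |X 0 ω|})
    (hsmall : 16 * m * (P.prod P).real {p | t - u < |X 0 p.1 - X 0 p.2|} ≤ c)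
    (hx : 2 * x < m * (t - u)) (κ : ℝ) :
    ENNReal.ofReal ((c / 16) ^ m / (8 * m.factorial)) ≤
      P {ω | x < |∑ i ∈ Finset.range n, X i ω - κ|} := by
  set Y : ℕ → Ω × Ω → ℝ := fun i p => X i p.1 - X i p.2
  have hY : ∀ i, Measurable (Y i) := fun i =>
    ((hmeas i).comp measurable_fst).sub ((hmeas i).comp measurable_snd)
  have hYind : iIndepFun Y (P.prod P) :=
    (hindep.prodMap hmeas hmeas hindep).comp (fun _ z => z.1 - z.2)
      fun _ => measurable_fst.sub measurable_snd
  set q := (P.prod P).real {p | t - u < Y 0 p}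
  have hqn : c ≤ 4 * n * q := by
    have htail' : c ≤ n * P.real {ω | t < |X 0 ω|} := by
      have := ENNReal.toReal_mono (by finiteness) htail
      rwa [ENNReal.toReal_ofReal hc0.le, ENNReal.toReal_mul, ENNReal.toReal_natCast] at this
    have := measureReal_lt_abs_le_four_mul_measureReal_prod (t := t) (hmeas 0) hu
    nlinarith [n.cast_nonneg (α := ℝ)]
  have hqm : 16 * m * q ≤ c := by
    have : q ≤ (P.prod P).real {p | t - u < |Y 0 p|} :=
      measureReal_mono fun p (hp : t - u < Y 0 p) => show t - u < |Y 0 p| from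
        hp.trans_le (le_abs_self _)
    nlinarith
  have hsymm := pow_div_factorial_le_measureReal_mul_le_sum hY hYind
    (identDistrib_sub_fst_snd hmeas hident) Measure.measurePreserving_swap
    (fun i p => (neg_sub _ _).symm) hc0 hc1 hm hqm hqn
  have htransfer : (P.prod P).real {p | m * (t - u) ≤ ∑ i ∈ Finset.range n, Y i p} ≤
      2 * P.real {ω | x < |∑ i ∈ Finset.range n, X i ω - κ|} := by
    refine (measureReal_mono fun p (hp : m * (t - u) ≤ ∑ i ∈ Finset.range n, Y i p) => ?_).trans
      (measureReal_prod_lt_sub_le_two_mul (f := fun ω => ∑ i ∈ Finset.range n, X i ω - κ) x)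
    show 2 * x < (∑ i ∈ Finset.range n, X i p.1 - κ) - (∑ i ∈ Finset.range n, X i p.2 - κ)
    rw [sub_sub_sub_cancel_right, ← Finset.sum_sub_distrib]
    linarith
  rw [ENNReal.ofReal_le_iff_le_toReal (measure_ne_top _ _)]
  calc (c / 16) ^ m / (8 * m.factorial) = (c / 16) ^ m / (4 * m.factorial) / 2 := by ring
    _ ≤ P.real {ω | x < |∑ i ∈ Finset.range n, X i ω - κ|} := by linarith

lemma limsup_measure_lt_abs_sum_sub_pos (hmeas : ∀ i, Measurable (X i)) (hindep : iIndepFun X P)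
    (hident : ∀ i, Measure.map (X i) P = Measure.map (X 0) P) {b : ℕ → ℝ} (hb : ∀ n, 0 < b n)
    (hbtop : Tendsto b atTop atTop)
    (htail : 0 < limsup (fun n : ℕ => (n : ENNReal) * P {ω | b n < |X 0 ω|}) atTop)
    (κ : ℕ → ℝ) {lam : ℝ} (hlam : 0 < lam) :
    0 < limsup (fun n : ℕ => P {ω | lam * b n < |∑ i ∈ Finset.range n, X i ω - κ n|}) atTop := by
  obtain ⟨c, hc0, hc1, hfreq⟩ := exists_frequently_ofReal_le_of_pos_limsup htail
  obtain ⟨u, hu⟩ := ((tendsto_measureReal_lt_abs_atTop P (hmeas 0)).eventually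
    (ge_mem_nhds (by norm_num : (0 : ℝ) < 1 / 2))).exists
  set m := max 1 ⌈4 * lam⌉₊
  have hm : 1 ≤ m := le_max_left _ _
  have hm4 : 4 * lam ≤ m := (Nat.le_ceil _).trans (by exact_mod_cast le_max_right _ _)
  have hsmall : ∀ᶠ n in atTop,
      16 * m * (P.prod P).real {p | b n - u < |X 0 p.1 - X 0 p.2|} ≤ c := by
    have hsym := (tendsto_measureReal_lt_abs_atTop (P.prod P) (W := fun p => X 0 p.1 - X 0 p.2)
      (((hmeas 0).comp measurable_fst).sub ((hmeas 0).comp measurable_snd))).comp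
        (tendsto_atTop_add_const_right _ (-u) hbtop)
    filter_upwards [hsym.eventually (ge_mem_nhds (show 0 < c / (16 * m) by positivity))]
      with n hn
    rw [le_div_iff₀ (by positivity)] at hn
    simpa only [Function.comp_apply, ← sub_eq_add_neg, mul_comm] using hn
  have hgap : ∀ᶠ n in atTop, 2 * (lam * b n) < m * (b n - u) := by
    filter_upwards [hbtop.eventually_gt_atTop (m * u / (2 * lam))] with n hn
    rw [div_lt_iff₀ (by positivity)] at hn
    nlinarith [mul_le_mul_of_nonneg_right hm4 (hb n).le]
  have hδ := (hfreq.and_eventually (hsmall.and hgap)).mono fun n ⟨htail, hsmall, hgap⟩ =>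
    ofReal_le_measure_lt_abs_sum_sub hmeas hindep hident hc0 hc1 hm hu htail hsmall hgap (κ n)
  exact (ENNReal.ofReal_pos.mpr (by positivity)).trans_le (le_limsup_of_frequently_le' hδ)

end IID

theorem stmt15_general {Ω : Type*} [MeasurableSpace Ω] (P : Measure Ω) [IsProbabilityMeasure P]
    (X : ℕ → Ω → ℝ)
    (hmeas : ∀ i, Measurable (X i))
    (hindep : iIndepFun X P)
    (hident : ∀ i, Measure.map (X i) P = Measure.map (X 0) P)
    (b : ℕ → ℝ) (hb : ∀ n, 0 < b n)
    (hbtop : Tendsto b atTop atTop)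
    (htail : 0 < Filter.limsup (fun n : ℕ => (n : ENNReal) * P {ω | b n < |X 0 ω|}) atTop) :
    (∀ lam : ℝ, 0 < lam →
      0 < Filter.limsup (fun n : ℕ =>
        P {ω | lam * b n < |∑ i ∈ Finset.range n, X i ω -
          (n : ℝ) * ∫ ω', (if |X 0 ω'| ≤ b n then X 0 ω' else 0) ∂P|}) atTop) ∧
    ¬ TendstoInMeasure P
      (fun n ω => (b n)⁻¹ *
        (∑ i ∈ Finset.range n, X i ω -
          (n : ℝ) * ∫ ω', (if |X 0 ω'| ≤ b n then X 0 ω' else 0) ∂P))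
      atTop (0 : Ω → ℝ) := by
  have hpos := fun lam (hlam : 0 < lam) => limsup_measure_lt_abs_sum_sub_pos hmeas hindep hident
    hb hbtop htail (fun n => (n : ℝ) * ∫ ω', (if |X 0 ω'| ≤ b n then X 0 ω' else 0) ∂P) hlam
  refine ⟨hpos, not_tendstoInMeasure_of_limsup_pos hb ?_⟩
  simpa only [one_mul] using hpos 1 one_pos

/-- Converse direction of Corollary 3.3: for i.i.d. real Xₙ and increasing bₙ → ∞,
if limsup n P(|X| > bₙ) > 0 then for every λ > 0,
limsup P(|Sₙ − n E[X 1{|X|≤bₙ}]|/bₙ > λ) > 0; in particular no convergence in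
probability to 0. -/
theorem stmt15 {Ω : Type*} [MeasurableSpace Ω] (P : Measure Ω) [IsProbabilityMeasure P]
    (X : ℕ → Ω → ℝ)
    (hmeas : ∀ i, Measurable (X i))
    (hindep : iIndepFun X P)
    (hident : ∀ i, Measure.map (X i) P = Measure.map (X 0) P)
    (b : ℕ → ℝ) (hb : ∀ n, 0 < b n) (hbmono : Monotone b)
    (hbtop : Tendsto b atTop atTop)
    (htail : 0 < Filter.limsup (fun n : ℕ => (n : ENNReal) * P {ω | b n < |X 0 ω|}) atTop) :
    (∀ lam : ℝ, 0 < lam →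
      0 < Filter.limsup (fun n : ℕ =>
        P {ω | lam * b n < |∑ i ∈ Finset.range n, X i ω -
          (n : ℝ) * ∫ ω', (if |X 0 ω'| ≤ b n then X 0 ω' else 0) ∂P|}) atTop) ∧
    ¬ TendstoInMeasure P
      (fun n ω => (b n)⁻¹ *
        (∑ i ∈ Finset.range n, X i ω -
          (n : ℝ) * ∫ ω', (if |X 0 ω'| ≤ b n then X 0 ω' else 0) ∂P))
      atTop (0 : Ω → ℝ) :=
  stmt15_general P X hmeas hindep hident b hb hbtop htail
end

section
/- Let {X, X_n} be i.i.d. B-valued random variables, {b_n} increasing positive reals with b_n → ∞, S_n = Σ_{i=1}^n X_i, γ_n = n E[X·1{‖X‖ ≤ b_n}]. If there exists a constant λ ∈ (0,∞) such that lim_{n→∞} P(‖S_n − γ_n‖/b_n > λ) = 0, then lim_{n→∞} n P(‖X − X'‖ > 2λ b_n) = 0, where X' is an independent copy of X. -/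
/-!
Symmetrize: with `Y i = X i - X' i`, the event `‖∑ Y i‖ > 2λbₙ` forces `‖Sₙ - γₙ‖ > λbₙ` or
`‖S'ₙ - γₙ‖ > λbₙ`, so it has probability at most `2qₙ`, where `qₙ → 0` by hypothesis. The `Y i`
are i.i.d. and symmetric, and Lévy's reflection argument (negate every summand except the first one
of norm `> t`, which preserves the joint law) gives `P(maxᵢ ‖Y i‖ > t) ≤ 2 P(‖∑ Y i‖ > t)`. Hence
`1 - (1 - pₙ)ⁿ ≤ 4qₙ → 0` for `pₙ = P(‖X - X'‖ > 2λbₙ)`, and as `(1 - p)ⁿ ≤ exp(-np)` this forces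
`n pₙ → 0`.
-/

open MeasureTheory ProbabilityTheory Set Filter Topology
open scoped ENNReal

section FirstExceedance

variable {ι : Type*} [LinearOrder ι]

def firstExceedance {E : Type*} [Norm E] (t : ℝ) (k : ι) : Set (ι → E) :=
  {x | t < ‖x k‖ ∧ ∀ j < k, ‖x j‖ ≤ t}

lemma iUnion_firstExceedance {E : Type*} [Norm E] [WellFoundedLT ι] (t : ℝ) :
    ⋃ k, firstExceedance t k = {x : ι → E | ∃ i, t < ‖x i‖} := by
  ext x
  simp only [firstExceedance, mem_iUnion, mem_ofPred_eq]
  refine ⟨fun ⟨k, hk, _⟩ => ⟨k, hk⟩, fun ⟨i, hi⟩ => ?_⟩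
  obtain ⟨k, hk, hmin⟩ := wellFounded_lt.has_min {i | t < ‖x i‖} ⟨i, hi⟩
  exact ⟨k, hk, fun j hjk => not_lt.1 fun hj => hmin j hj hjk⟩

lemma pairwise_disjoint_firstExceedance {E : Type*} [Norm E] (t : ℝ) :
    Pairwise (Function.onFun Disjoint (firstExceedance (ι := ι) (E := E) t)) :=
  (pairwise_disjoint_on _).2 fun _ _ hkl => disjoint_left.2 fun _ hk hl => (hl.2 _ hkl).not_gt hk.1

lemma measurableSet_firstExceedance [Countable ι] {E : Type*} [SeminormedAddCommGroup E]
    [MeasurableSpace E] [OpensMeasurableSpace E] (t : ℝ) (k : ι) :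
    MeasurableSet (firstExceedance (E := E) t k) := by
  simp only [firstExceedance, ofPred_and, ofPred_forall]
  exact (measurableSet_lt measurable_const (by fun_prop)).inter
    (.iInter fun j => .iInter fun _ => measurableSet_le (by fun_prop) measurable_const)

end FirstExceedance

section Levy

variable {ι E : Type*} [Fintype ι] [NormedAddCommGroup E] [NormedSpace ℝ E] [MeasurableSpace E]
  [BorelSpace E] [SecondCountableTopology E]
  (ν : ι → Measure E) [∀ i, SigmaFinite (ν i)] [∀ i, (ν i).IsNegInvariant]

lemma measure_firstExceedance_le_two_mul [LinearOrder ι] (t : ℝ) (k : ι) :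
    Measure.pi ν (firstExceedance t k) ≤
      2 * Measure.pi ν (firstExceedance t k ∩ {x | t < ‖∑ i, x i‖}) := by
  set B := firstExceedance (E := E) t k
  set G := {x : ι → E | t < ‖∑ i, x i‖}
  set F : (ι → E) → ι → E := fun x i => if i = k then x i else -x i
  have hF : MeasurePreserving F (Measure.pi ν) (Measure.pi ν) := by
    convert measurePreserving_pi ν ν (f := fun i => if i = k then id else Neg.neg) fun i => by
      split_ifs
      exacts [.id _, Measure.measurePreserving_neg _] using 1
    ext x i
    simp only [F]
    split_ifs <;> rfl
  have hFnorm : ∀ x i, ‖F x i‖ = ‖x i‖ := by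
    intro x i
    by_cases h : i = k <;> simp [F, h]
  have hFB : F ⁻¹' B = B := by ext x; simp [B, firstExceedance, hFnorm]
  have hsum : ∀ x, ∑ i, x i + ∑ i, F x i = (2 : ℝ) • x k := by
    intro x
    rw [← Finset.sum_add_distrib, Finset.sum_eq_single k (fun i _ hik => by simp [F, hik])
      (by simp), two_smul]
    simp [F]
  have hcover : B ⊆ (B ∩ G) ∪ F ⁻¹' (B ∩ G) := by
    intro x hx
    have hFx : x ∈ F ⁻¹' B := hFB.symm ▸ hx
    have : t < ‖∑ i, x i‖ ∨ t < ‖∑ i, F x i‖ := by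
      by_contra! h
      have := norm_add_le (∑ i, x i) (∑ i, F x i)
      rw [hsum, norm_smul, Real.norm_two] at this
      linarith [hx.1]
    exact this.imp (fun h => ⟨hx, h⟩) fun h => ⟨hFx, h⟩
  have hBm : MeasurableSet (B ∩ G) := (measurableSet_firstExceedance t k).inter
    (measurableSet_lt measurable_const (by fun_prop))
  calc Measure.pi ν B ≤ Measure.pi ν (B ∩ G) + Measure.pi ν (F ⁻¹' (B ∩ G)) :=
        (measure_mono hcover).trans (measure_union_le _ _)
    _ = 2 * Measure.pi ν (B ∩ G) := by
        rw [hF.measure_preimage hBm.nullMeasurableSet, two_mul]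

theorem pi_exists_lt_norm_le_two_mul_pi_lt_norm_sum (t : ℝ) :
    Measure.pi ν {x | ∃ i, t < ‖x i‖} ≤ 2 * Measure.pi ν {x | t < ‖∑ i, x i‖} := by
  let _ : LinearOrder ι := LinearOrder.lift' _ (Fintype.equivFin ι).injective
  set G := {x : ι → E | t < ‖∑ i, x i‖}
  have hdisj : Pairwise (Function.onFun Disjoint fun k => firstExceedance t k ∩ G) :=
    (pairwise_disjoint_firstExceedance t).mono fun _ _ h =>
      h.mono inter_subset_left inter_subset_left
  have hmeas : ∀ k, MeasurableSet (firstExceedance t k ∩ G) := fun k =>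
    (measurableSet_firstExceedance t k).inter
      (measurableSet_lt measurable_const (by fun_prop))
  rw [← iUnion_firstExceedance]
  calc Measure.pi ν (⋃ k, firstExceedance t k)
      ≤ ∑ k, Measure.pi ν (firstExceedance t k) := measure_iUnion_fintype_le _ _
    _ ≤ ∑ k, 2 * Measure.pi ν (firstExceedance t k ∩ G) :=
        Finset.sum_le_sum fun k _ => measure_firstExceedance_le_two_mul ν t k
    _ = 2 * Measure.pi ν (⋃ k, firstExceedance t k ∩ G) := by
        rw [← Finset.mul_sum, measure_iUnion hdisj hmeas, tsum_fintype]
    _ ≤ 2 * Measure.pi ν G := by gcongr; exact iUnion_subset fun k => inter_subset_right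

end Levy

lemma pi_exists_mem_eq_one_sub_pow {ι β : Type*} [Fintype ι] [MeasurableSpace β]
    (κ : Measure β) [IsProbabilityMeasure κ] {D : Set β} (hD : MeasurableSet D) :
    Measure.pi (fun _ : ι => κ) {y | ∃ i, y i ∈ D} = 1 - (1 - κ D) ^ Fintype.card ι := by
  have : {y : ι → β | ∃ i, y i ∈ D} = (univ.pi fun _ => Dᶜ)ᶜ := by ext; simp
  rw [this, prob_compl_eq_one_sub (.univ_pi fun _ => hD.compl), Measure.pi_pi,
    prob_compl_eq_one_sub hD, Finset.prod_const, Finset.card_univ]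

section Pairs

variable {Ω α : Type*} [MeasurableSpace Ω] [MeasurableSpace α]

lemma map_prodMk_eq_pi_prod {ι : Type*} [Fintype ι] {P : Measure Ω} [IsProbabilityMeasure P]
    {X X' : ι → Ω → α}
    (hX : ∀ i, Measurable (X i)) (hX' : ∀ i, Measurable (X' i))
    (hindep : iIndepFun (Sum.elim X X') P) :
    P.map (fun ω i => (X i ω, X' i ω)) =
      Measure.pi fun i => (P.map (X i)).prod (P.map (X' i)) := by
  have hm : ∀ j, Measurable (Sum.elim X X' j) := Sum.rec hX hX'
  have hjoint := (iIndepFun_iff_map_fun_eq_pi_map fun j => (hm j).aemeasurable).1 hindep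
  have : (fun ω i => (X i ω, X' i ω)) = (MeasurableEquiv.arrowProdEquivProdArrow α α ι).symm ∘
      MeasurableEquiv.sumPiEquivProdPi (fun _ => α) ∘ fun ω j => Sum.elim X X' j ω := rfl
  rw [this, ← Measure.map_map (by fun_prop) (by fun_prop), ← Measure.map_map (by fun_prop)
    (measurable_pi_lambda _ hm), hjoint, (measurePreserving_sumPiEquivProdPi _).map_eq,
    ← (measurePreserving_arrowProdEquivProdArrow α α ι _ _).map_eq,
    MeasurableEquiv.map_symm_map]
  rfl

lemma map_prodMk_fin_eq_pi {P : Measure Ω} [IsProbabilityMeasure P] {X X' : ℕ → Ω → α}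
    (hX : ∀ i, Measurable (X i)) (hX' : ∀ i, Measurable (X' i))
    (hindep : iIndepFun (Sum.elim X X') P)
    (hident : ∀ i, P.map (Sum.elim X X' i) = P.map (X 0)) (n : ℕ) :
    P.map (fun ω (i : Fin n) => (X i ω, X' i ω)) =
      Measure.pi fun _ => (P.map (X 0)).prod (P.map (X 0)) := by
  have hindep_n : iIndepFun (Sum.elim (fun i : Fin n => X i) fun i : Fin n => X' i) P := by
    have : (Sum.elim (fun i : Fin n => X i) fun i : Fin n => X' i) =
        fun j => Sum.elim X X' (Sum.map Fin.val Fin.val j) := by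
      ext (i | i) : 1 <;> rfl
    rw [this]
    exact hindep.precomp (Sum.map_injective.2 ⟨Fin.val_injective, Fin.val_injective⟩)
  rw [map_prodMk_eq_pi_prod (X := fun i : Fin n => X i) (fun i => hX i) (fun i => hX' i)
    hindep_n]
  congr with i : 1
  exact congr_arg₂ Measure.prod (hident (.inl i)) (hident (.inr i))

end Pairs

section Symmetrization

variable {E : Type*} [NormedAddCommGroup E] [MeasurableSpace E] [BorelSpace E]
  [SecondCountableTopology E] {κ : Measure (E × E)}

lemma isNegInvariant_map_sub (hκ : κ.map Prod.swap = κ) :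
    (κ.map fun p => p.1 - p.2).IsNegInvariant := by
  constructor
  rw [Measure.neg_def, Measure.map_map measurable_neg (by fun_prop)]
  conv_rhs => rw [← hκ, Measure.map_map (by fun_prop) measurable_swap]
  congr 1
  ext p
  simp

lemma pi_lt_norm_sum_sub_le_two_mul [SigmaFinite κ] (hκ : κ.map Prod.swap = κ)
    {ι : Type*} [Fintype ι] (s : ℝ) (v : E) :
    Measure.pi (fun _ : ι => κ) {y | 2 * s < ‖∑ i, ((y i).1 - (y i).2)‖} ≤
      2 * Measure.pi (fun _ : ι => κ) {y | s < ‖∑ i, (y i).1 - v‖} := by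
  set A₁ := {y : ι → E × E | s < ‖∑ i, (y i).1 - v‖}
  set A₂ := {y : ι → E × E | s < ‖∑ i, (y i).2 - v‖}
  have hsub : {y : ι → E × E | 2 * s < ‖∑ i, ((y i).1 - (y i).2)‖} ⊆ A₁ ∪ A₂ := by
    intro y hy
    by_contra! h
    simp only [mem_union, A₁, A₂, mem_ofPred_eq, not_or, not_lt] at h
    have : ∑ i, ((y i).1 - (y i).2) = (∑ i, (y i).1 - v) - (∑ i, (y i).2 - v) := by
      rw [Finset.sum_sub_distrib]; abel
    have := this ▸ norm_sub_le (∑ i, (y i).1 - v) (∑ i, (y i).2 - v)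
    simp only [mem_ofPred_eq] at hy
    linarith
  have hswap : MeasurePreserving (fun (y : ι → E × E) i => (y i).swap)
      (Measure.pi fun _ => κ) (Measure.pi fun _ => κ) :=
    measurePreserving_pi _ _ fun _ => ⟨measurable_swap, hκ⟩
  have hA : Measure.pi (fun _ : ι => κ) A₂ = Measure.pi (fun _ : ι => κ) A₁ := by
    rw [← hswap.measure_preimage
      (measurableSet_lt measurable_const (by fun_prop)).nullMeasurableSet]
    rfl
  calc _ ≤ Measure.pi (fun _ : ι => κ) A₁ + Measure.pi (fun _ : ι => κ) A₂ :=
        (measure_mono hsub).trans (measure_union_le _ _)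
    _ = _ := by rw [hA, two_mul]

lemma one_sub_pow_le_four_mul_pi [NormedSpace ℝ E] [IsProbabilityMeasure κ]
    (hκ : κ.map Prod.swap = κ) (s : ℝ) (v : E) (n : ℕ) :
    1 - (1 - κ {p | 2 * s < ‖p.1 - p.2‖}) ^ n ≤
      4 * Measure.pi (fun _ : Fin n => κ) {y | s < ‖∑ i, (y i).1 - v‖} := by
  set ν := κ.map fun p => p.1 - p.2
  have := isNegInvariant_map_sub hκ
  have hlaw : (Measure.pi fun _ : Fin n => κ).map (fun y i => (y i).1 - (y i).2) =
      Measure.pi fun _ => ν :=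
    Measure.pi_map_pi (f := fun _ (p : E × E) => p.1 - p.2) fun _ => by fun_prop
  have hD : MeasurableSet {p : E × E | 2 * s < ‖p.1 - p.2‖} :=
    measurableSet_lt measurable_const (by fun_prop)
  calc 1 - (1 - κ {p | 2 * s < ‖p.1 - p.2‖}) ^ n
      = Measure.pi (fun _ : Fin n => κ) {y | ∃ i, y i ∈ {p : E × E | 2 * s < ‖p.1 - p.2‖}} := by
        rw [pi_exists_mem_eq_one_sub_pow κ hD, Fintype.card_fin]
    _ = Measure.pi (fun _ : Fin n => ν) {x | ∃ i, 2 * s < ‖x i‖} := by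
        rw [← hlaw, Measure.map_apply (by fun_prop) (by
          rw [ofPred_exists]
          exact .iUnion fun i => measurableSet_lt measurable_const (by fun_prop))]
        rfl
    _ ≤ 2 * Measure.pi (fun _ : Fin n => ν) {x | 2 * s < ‖∑ i, x i‖} :=
        pi_exists_lt_norm_le_two_mul_pi_lt_norm_sum _ _
    _ = 2 * Measure.pi (fun _ : Fin n => κ) {y | 2 * s < ‖∑ i, ((y i).1 - (y i).2)‖} := by
        rw [← hlaw,
          Measure.map_apply (by fun_prop) (measurableSet_lt measurable_const (by fun_prop))]
        rfl
    _ ≤ 2 * (2 * Measure.pi (fun _ : Fin n => κ) {y | s < ‖∑ i, (y i).1 - v‖}) := by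
        gcongr
        exact pi_lt_norm_sum_sub_le_two_mul hκ s v
    _ = _ := by rw [← mul_assoc]; norm_num

lemma one_sub_pow_le_four_mul_measure [NormedSpace ℝ E] {Ω : Type*} [MeasurableSpace Ω]
    {P : Measure Ω} [IsProbabilityMeasure P] {X X' : ℕ → Ω → E}
    (hX : ∀ i, Measurable (X i)) (hX' : ∀ i, Measurable (X' i))
    (hindep : iIndepFun (Sum.elim X X') P)
    (hident : ∀ i, P.map (Sum.elim X X' i) = P.map (X 0)) (s : ℝ) (v : E) (n : ℕ) :
    1 - (1 - P {ω | 2 * s < ‖X 0 ω - X' 0 ω‖}) ^ n ≤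
      4 * P {ω | s < ‖∑ i ∈ Finset.range n, X i ω - v‖} := by
  set μ := P.map (X 0)
  have : IsProbabilityMeasure μ := Measure.isProbabilityMeasure_map (hX 0).aemeasurable
  have hpair : P.map (fun ω => (X 0 ω, X' 0 ω)) = μ.prod μ := by
    rw [(indepFun_iff_map_prod_eq_prod_map_map (hX 0).aemeasurable (hX' 0).aemeasurable).1
      (hindep.indepFun Sum.inl_ne_inr), show P.map (X' 0) = μ from hident (.inr 0)]
  calc _ = 1 - (1 - μ.prod μ {p | 2 * s < ‖p.1 - p.2‖}) ^ n := by
        rw [← hpair,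
          Measure.map_apply (by fun_prop) (measurableSet_lt measurable_const (by fun_prop))]
        rfl
    _ ≤ 4 * Measure.pi (fun _ : Fin n => μ.prod μ) {y | s < ‖∑ i, (y i).1 - v‖} :=
        one_sub_pow_le_four_mul_pi Measure.prod_swap s v n
    _ = _ := by
        rw [← map_prodMk_fin_eq_pi hX hX' hindep hident n,
          Measure.map_apply (by fun_prop) (measurableSet_lt measurable_const (by fun_prop))]
        simp only [preimage_ofPred_eq, Finset.sum_range]

end Symmetrization

lemma Real.tendsto_natCast_mul_of_tendsto_one_sub_pow {p : ℕ → ℝ} (h0 : ∀ n, 0 ≤ p n)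
    (h1 : ∀ n, p n ≤ 1) (h : Tendsto (fun n => (1 - p n) ^ n) atTop (𝓝 1)) :
    Tendsto (fun n => n * p n) atTop (𝓝 0) := by
  have hexp : Tendsto (fun n : ℕ => Real.exp (-(n * p n))) atTop (𝓝 1) := by
    refine tendsto_of_tendsto_of_tendsto_of_le_of_le h tendsto_const_nhds (fun n => ?_)
      fun n => ?_
    · rw [neg_mul_eq_mul_neg, Real.exp_nat_mul]
      exact pow_le_pow_left₀ (sub_nonneg.2 (h1 n)) (Real.one_sub_le_exp_neg _) n
    · exact Real.exp_le_one_iff.2 (neg_nonpos.2 (mul_nonneg n.cast_nonneg (h0 n)))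
  simpa using ((Real.continuousAt_log one_ne_zero).tendsto.comp hexp).neg

lemma ENNReal.tendsto_natCast_mul_of_tendsto_one_sub_pow {p : ℕ → ℝ≥0∞} (h1 : ∀ n, p n ≤ 1)
    (h : Tendsto (fun n => 1 - (1 - p n) ^ n) atTop (𝓝 0)) :
    Tendsto (fun n : ℕ => (n : ℝ≥0∞) * p n) atTop (𝓝 0) := by
  have hp : ∀ n : ℕ, p n ≠ ∞ := fun n => ne_top_of_le_ne_top one_ne_top (h1 n)
  have hreal : ∀ n : ℕ, (1 - (1 - p n) ^ n).toReal = 1 - (1 - (p n).toReal) ^ n := fun n => by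
    rw [toReal_sub_of_le (pow_le_one₀ bot_le tsub_le_self) one_ne_top, toReal_pow,
      toReal_sub_of_le (h1 n) one_ne_top, toReal_one]
  have hpow : Tendsto (fun n => (1 - (p n).toReal) ^ n) atTop (𝓝 1) := by
    have := ((tendsto_toReal zero_ne_top).comp h).const_sub 1
    simpa [Function.comp_def, hreal] using this
  have := tendsto_ofReal <| Real.tendsto_natCast_mul_of_tendsto_one_sub_pow
    (fun n => toReal_nonneg) (fun n => toReal_le_of_le_ofReal zero_le_one (by simpa using h1 n))
    hpow
  simpa [ofReal_mul, ofReal_toReal (hp _)] using this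

theorem stmt18_general {Ω : Type*} [MeasurableSpace Ω] (P : Measure Ω) [IsProbabilityMeasure P]
    {E : Type*} [NormedAddCommGroup E] [NormedSpace ℝ E]
    [SecondCountableTopology E] [MeasurableSpace E] [BorelSpace E]
    (X X' : ℕ → Ω → E)
    (hmeas : ∀ i, Measurable (X i)) (hmeas' : ∀ i, Measurable (X' i))
    (hindep : iIndepFun (Sum.elim X X') P)
    (hident : ∀ i : ℕ ⊕ ℕ, Measure.map (Sum.elim X X' i) P = Measure.map (X 0) P)
    (b : ℕ → ℝ)
    (lam : ℝ)
    (hconv : Tendsto (fun n : ℕ =>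
      P {ω | lam * b n < ‖∑ i ∈ Finset.range n, X i ω -
        (n : ℝ) • ∫ ω', (if ‖X 0 ω'‖ ≤ b n then X 0 ω' else 0) ∂P‖})
      atTop (nhds 0)) :
    Tendsto (fun n : ℕ =>
        (n : ENNReal) * P {ω | 2 * lam * b n < ‖X 0 ω - X' 0 ω‖})
      atTop (nhds 0) := by
  refine ENNReal.tendsto_natCast_mul_of_tendsto_one_sub_pow (fun n => prob_le_one) ?_
  refine tendsto_of_tendsto_of_tendsto_of_le_of_le tendsto_const_nhds
    (by simpa using ENNReal.Tendsto.const_mul (a := 4) hconv (.inr ENNReal.ofNat_ne_top))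
    (fun n => bot_le) fun n => ?_
  simpa only [mul_assoc] using
    one_sub_pow_le_four_mul_measure hmeas hmeas' hindep hident (lam * b n) _ n

/-- If for some λ ∈ (0,∞), P(‖Sₙ − γₙ‖/bₙ > λ) → 0, where
γₙ = n E[X 1{‖X‖≤bₙ}], then n P(‖X − X'‖ > 2λ bₙ) → 0, where X' is an
independent copy of X. -/
theorem stmt18 {Ω : Type*} [MeasurableSpace Ω] (P : Measure Ω) [IsProbabilityMeasure P]
    {E : Type*} [NormedAddCommGroup E] [NormedSpace ℝ E] [CompleteSpace E]
    [SecondCountableTopology E] [MeasurableSpace E] [BorelSpace E]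
    (X X' : ℕ → Ω → E)
    (hmeas : ∀ i, Measurable (X i)) (hmeas' : ∀ i, Measurable (X' i))
    (hindep : iIndepFun (Sum.elim X X') P)
    (hident : ∀ i : ℕ ⊕ ℕ, Measure.map (Sum.elim X X' i) P = Measure.map (X 0) P)
    (b : ℕ → ℝ) (hb : ∀ n, 0 < b n) (hbmono : Monotone b)
    (hbtop : Tendsto b atTop atTop)
    (hInt : ∀ n : ℕ, Integrable (fun ω => if ‖X 0 ω‖ ≤ b n then X 0 ω else 0) P)
    (lam : ℝ) (hlam : 0 < lam)
    (hconv : Tendsto (fun n : ℕ =>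
      P {ω | lam * b n < ‖∑ i ∈ Finset.range n, X i ω -
        (n : ℝ) • ∫ ω', (if ‖X 0 ω'‖ ≤ b n then X 0 ω' else 0) ∂P‖})
      atTop (nhds 0)) :
    Tendsto (fun n : ℕ =>
        (n : ENNReal) * P {ω | 2 * lam * b n < ‖X 0 ω - X' 0 ω‖})
      atTop (nhds 0) :=
  stmt18_general P X X' hmeas hmeas' hindep hident b lam hconv
end
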